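/- arXiv:1910.14541 — 5 statements merged into one kernel-verified Lean document; each statement's English description precedes it below -/
import Mathlib

section
/- Let k be a field. The polynomial ring k[t_1,...,t_ℓ] is a free module of rank ℓ! over its subring k[c_1,...,c_ℓ] generated by the elementary symmetric polynomials. -/
/-!
The monomials `t^a` with `a i < ℓ - i` (Artin's basis) span: `t_i` is a root of
`∏_{j ≥ i} (T - t_j)`, a monic polynomial of degree `ℓ - i` whose coefficients lie in the
algebra generated by the `c_s` and `t_0, …, t_{i-1}`, so by induction on `i` multiplication by
`t_i` preserves their span. There are `ℓ!` of them, and their images span the fraction field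
`K` over the fixed field `K^{S_ℓ}`, of degree `|S_ℓ| = ℓ!` by Artin's theorem; hence they are
independent over `K^{S_ℓ}`, a fortiori over the symmetric polynomials.
-/

open MvPolynomial Finset

namespace Multiset

theorem esymm_cons_succ {R : Type*} [CommSemiring R] (a : R) (s : Multiset R) (k : ℕ) :
    (a ::ₘ s).esymm (k + 1) = s.esymm (k + 1) + a * s.esymm k := by
  simp [esymm, powersetCard_cons, Multiset.sum_map_mul_left]

theorem pow_card_eq_sum_esymm {R : Type*} [CommRing R] {s : Multiset R} {x : R} (hx : x ∈ s) :
    x ^ card s =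
      ∑ j ∈ Finset.range (card s), (-1) ^ j * s.esymm (j + 1) * x ^ (card s - (j + 1)) := by
  have hroot := congrArg (Polynomial.eval x) (prod_X_sub_X_eq_sum_esymm s)
  rw [Polynomial.eval_multiset_prod, prod_eq_zero (mem_map.2 ⟨_, mem_map_of_mem _ hx, by simp⟩),
    Polynomial.eval_finsetSum, sum_range_succ'] at hroot
  have hesymm_zero : s.esymm 0 = 1 := by simp [esymm]
  simp only [Polynomial.eval_mul, Polynomial.eval_pow, Polynomial.eval_neg, Polynomial.eval_one,
    Polynomial.eval_C, Polynomial.eval_X, pow_succ, hesymm_zero, mul_neg_one, neg_mul,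
    sum_neg_distrib, pow_zero, one_mul, Nat.sub_zero] at hroot
  simp only [mul_assoc]
  linear_combination -hroot

end Multiset

theorem span_range_algebraMap_eq_top (B K F : Type*) [CommRing B] [IsDomain B] [Field K]
    [Algebra B K] [IsFractionRing B K] [Field F] [Algebra F K] [Algebra.IsAlgebraic F K] :
    Submodule.span F (Set.range (algebraMap B K)) = ⊤ := by
  set S := Algebra.adjoin F (Set.range (algebraMap B K))
  have hS : Subalgebra.toSubmodule S = Submodule.span F (Set.range (algebraMap B K)) := by
    rw [Algebra.adjoin_eq_span, ← (algebraMap B K).coe_rangeS, ← Subsemiring.coe_toSubmonoid,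
      Submonoid.closure_eq]
  rw [← hS, eq_top_iff]
  intro x _
  obtain ⟨r, s, -, rfl⟩ := IsFractionRing.div_surjective (A := B) x
  have hr : algebraMap B K r ∈ S := Algebra.subset_adjoin ⟨r, rfl⟩
  have hs_inv : (algebraMap B K s)⁻¹ ∈ S :=
    Subalgebra.inv_mem_of_algebraic S (x := ⟨_, Algebra.subset_adjoin ⟨s, rfl⟩⟩)
      (Algebra.IsAlgebraic.isAlgebraic _)
  rw [div_eq_mul_inv]
  exact S.mul_mem hr hs_inv

section ScalarExtension

variable {R B K : Type*} [CommRing R] [CommRing B] [Algebra R B] [Field K]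
  {A : Subalgebra R B} {F : Subfield K} {φ : B →+* K} {ι : Type*} {v : ι → B}

theorem range_subset_span_comp_of_span_eq_top (hφA : ∀ a ∈ A, φ a ∈ F)
    (hv : Submodule.span A (Set.range v) = ⊤) :
    Set.range φ ⊆ Submodule.span F (Set.range (φ ∘ v)) := by
  rintro _ ⟨b, rfl⟩
  have hb : b ∈ Submodule.span A (Set.range v) := hv ▸ Submodule.mem_top
  induction hb using Submodule.span_induction with
  | mem x hx =>
    obtain ⟨i, rfl⟩ := hx
    exact Submodule.subset_span ⟨i, rfl⟩
  | zero => rw [map_zero]; exact zero_mem _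
  | add x y _ _ hx hy => rw [map_add]; exact add_mem hx hy
  | smul a x _ hx =>
    rw [Subalgebra.smul_def, smul_eq_mul, map_mul]
    exact Submodule.smul_mem _ ⟨_, hφA a a.2⟩ hx

theorem LinearIndependent.of_comp_of_map_mem (hφA : ∀ a ∈ A, φ a ∈ F)
    (hφ : Function.Injective φ) (hv : LinearIndependent F (φ ∘ v)) : LinearIndependent A v := by
  rw [linearIndependent_iff'] at hv ⊢
  intro s g hg i hi
  have hφg := hv s (fun i => ⟨φ (g i), hφA _ (g i).2⟩) (by
    simpa [Subalgebra.smul_def, Subfield.smul_def] using congrArg φ hg) i hi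
  exact Subtype.ext (hφ (by simpa using congrArg Subtype.val hφg))

end ScalarExtension

namespace MvPolynomial

theorem mul_mem_of_forall_X_mul_mem {σ R : Type*} [CommSemiring R]
    {A : Subalgebra R (MvPolynomial σ R)} {M : Submodule A (MvPolynomial σ R)}
    (hX : ∀ i, ∀ m ∈ M, X i * m ∈ M) (p : MvPolynomial σ R) {m : MvPolynomial σ R}
    (hm : m ∈ M) : p * m ∈ M := by
  induction p using MvPolynomial.induction_on generalizing m with
  | C a => exact M.smul_mem (algebraMap R A a) hm
  | add p q hp hq => rw [add_mul]; exact add_mem (hp hm) (hq hm)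
  | mul_X p i hp => rw [mul_assoc]; exact hp (hX i m hm)

section PermAction

noncomputable instance {σ R : Type*} [CommSemiring R] :
    MulSemiringAction (Equiv.Perm σ) (MvPolynomial σ R) where
  smul e p := rename e p
  one_smul p := rename_id_apply p
  mul_smul e f p := (rename_rename f e p).symm
  smul_zero e := map_zero (rename e)
  smul_add e := map_add (rename e)
  smul_one e := map_one (rename e)
  smul_mul e := map_mul (rename e)

theorem perm_smul_eq_rename {σ R : Type*} [CommSemiring R] (e : Equiv.Perm σ)
    (p : MvPolynomial σ R) : e • p = rename e p :=
  rfl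

instance {σ R : Type*} [CommSemiring R] [Nontrivial R] :
    FaithfulSMul (Equiv.Perm σ) (MvPolynomial σ R) where
  eq_of_smul_eq_smul h :=
    Equiv.ext fun i => X_injective (R := R) (by simpa [perm_smul_eq_rename] using h (X i))

variable {σ R : Type*} [CommRing R] [IsDomain R]

noncomputable instance : MulSemiringAction (Equiv.Perm σ) (FractionRing (MvPolynomial σ R)) :=
  IsFractionRing.mulSemiringAction _ (MvPolynomial σ R) _

instance : FaithfulSMul (Equiv.Perm σ) (FractionRing (MvPolynomial σ R)) :=
  IsFractionRing.faithfulSMul _ (MvPolynomial σ R) _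

theorem algebraMap_mem_fixedPoints_of_isSymmetric {p : MvPolynomial σ R} (hp : p.IsSymmetric) :
    algebraMap _ (FractionRing (MvPolynomial σ R)) p ∈
      FixedPoints.subfield (Equiv.Perm σ) (FractionRing (MvPolynomial σ R)) := fun e => by
  rw [← algebraMap.coe_smul', perm_smul_eq_rename, hp e]

theorem finrank_fixedPoints_fractionRing [Fintype σ] [DecidableEq σ] :
    Module.finrank (FixedPoints.subfield (Equiv.Perm σ) (FractionRing (MvPolynomial σ R)))
      (FractionRing (MvPolynomial σ R)) = (Fintype.card σ).factorial := by
  rw [FixedPoints.finrank_eq_card, Fintype.card_perm]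

end PermAction

variable (R : Type*) [CommRing R] (n : ℕ)

noncomputable section

abbrev esymmSubalgebra : Subalgebra R (MvPolynomial (Fin n) R) :=
  Algebra.adjoin R (Set.range fun i : Fin n => esymm (Fin n) R ((i : ℕ) + 1))

theorem esymm_mem_esymmSubalgebra (s : ℕ) : esymm (Fin n) R s ∈ esymmSubalgebra R n := by
  rcases s with _ | s
  · rw [esymm_zero]; exact one_mem _
  rcases lt_or_ge s n with hs | hs
  · exact Algebra.subset_adjoin ⟨⟨s, hs⟩, rfl⟩
  · rw [esymm, powersetCard_eq_empty.2 (by simpa using Nat.lt_succ_of_le hs), sum_empty]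
    exact zero_mem _

theorem esymmSubalgebra_le_symmetricSubalgebra :
    esymmSubalgebra R n ≤ symmetricSubalgebra (Fin n) R :=
  Algebra.adjoin_le (Set.range_subset_iff.2 fun _ => esymm_isSymmetric _ _ _)

def tailVars (j : ℕ) : Multiset (MvPolynomial (Fin n) R) :=
  (univ.filter fun i : Fin n => j ≤ i).val.map X

variable {R n}

theorem esymm_tailVars_zero (s : ℕ) : (tailVars R n 0).esymm s = esymm (Fin n) R s := by
  simp [tailVars, esymm_eq_multiset_esymm]

theorem tailVars_eq_cons {j : ℕ} (hj : j < n) :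
    tailVars R n j = X ⟨j, hj⟩ ::ₘ tailVars R n (j + 1) := by
  have : univ.filter (fun i : Fin n => j ≤ i) =
      insert ⟨j, hj⟩ (univ.filter fun i : Fin n => j + 1 ≤ i) := by
    ext i
    simp only [mem_filter, mem_univ, true_and, mem_insert, Fin.ext_iff]
    omega
  rw [tailVars, tailVars, this, insert_val_of_notMem (by simp), Multiset.map_cons]

theorem tailVars_succ_of_le {j : ℕ} (hj : n ≤ j) : tailVars R n (j + 1) = tailVars R n j := by
  have : ∀ i : Fin n, ¬ j ≤ i := fun i => by omega
  simp [tailVars, this, fun i : Fin n => show ¬ j + 1 ≤ i by omega]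

theorem card_tailVars (j : ℕ) : Multiset.card (tailVars R n j) = n - j := by
  have h := card_filter_add_card_filter_not (s := (univ : Finset (Fin n))) (· < j)
  simp only [Fin.card_filter_val_lt, not_lt, card_univ, Fintype.card_fin] at h
  simp only [tailVars, Multiset.card_map, card_val]
  omega

theorem X_mem_tailVars (i : Fin n) : (X i : MvPolynomial (Fin n) R) ∈ tailVars R n i :=
  Multiset.mem_map_of_mem _ (by simp)

theorem X_pow_eq_sum_esymm_tailVars (i : Fin n) :
    (X i : MvPolynomial (Fin n) R) ^ (n - i) = ∑ s ∈ range (n - i),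
      (-1) ^ s * (tailVars R n i).esymm (s + 1) * X i ^ (n - i - (s + 1)) := by
  rw [← card_tailVars (R := R) i]
  exact Multiset.pow_card_eq_sum_esymm (X_mem_tailVars i)

theorem esymm_tailVars_mul_mem {M : Submodule (esymmSubalgebra R n) (MvPolynomial (Fin n) R)}
    {j : ℕ} (hX : ∀ i : Fin n, i < j → ∀ m ∈ M, X i * m ∈ M) (s : ℕ) {m : MvPolynomial (Fin n) R}
    (hm : m ∈ M) : (tailVars R n j).esymm s * m ∈ M := by
  induction j generalizing s m with
  | zero =>
    rw [esymm_tailVars_zero]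
    exact M.smul_mem ⟨_, esymm_mem_esymmSubalgebra R n s⟩ hm
  | succ j ih =>
    have ih' := ih fun i hi => hX i (by omega)
    rcases lt_or_ge j n with hj | hj
    · induction s generalizing m with
      | zero => simpa [Multiset.esymm, Multiset.powersetCard_zero_left] using hm
      | succ s ihs =>
        have hrec := Multiset.esymm_cons_succ (X ⟨j, hj⟩) (tailVars R n (j + 1)) s
        rw [← tailVars_eq_cons hj] at hrec
        rw [eq_sub_of_add_eq hrec.symm, sub_mul, mul_assoc]
        exact sub_mem (ih' _ hm) (hX ⟨j, hj⟩ (by simp) _ (ihs hm))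
    · rw [tailVars_succ_of_le hj]; exact ih' s hm

variable (R n)

abbrev ArtinExponent : Type := (i : Fin n) → Fin (n - i)

def artinMonomial (a : ArtinExponent n) : MvPolynomial (Fin n) R := ∏ i, X i ^ (a i : ℕ)

variable {R n}

theorem card_artinExponent : Fintype.card (ArtinExponent n) = n.factorial := by
  rw [Fintype.card_pi]
  simp only [Fintype.card_fin]
  rw [Fin.prod_univ_eq_prod_range (fun i => n - i), ← Nat.descFactorial_eq_prod_range,
    Nat.descFactorial_self]

theorem artinMonomial_update (a : ArtinExponent n) (i : Fin n) (e : Fin (n - i)) :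
    artinMonomial R n (Function.update a i e) =
      X i ^ (e : ℕ) * ∏ l ∈ univ.erase i, X l ^ (a l : ℕ) := by
  rw [artinMonomial, ← mul_prod_erase _ _ (mem_univ i), Function.update_self]
  congr 1
  refine prod_congr rfl fun l hl => ?_
  rw [Function.update_of_ne (ne_of_mem_erase hl)]

theorem X_mul_mem_span_artinMonomial (i : Fin n) {m : MvPolynomial (Fin n) R}
    (hm : m ∈ Submodule.span (esymmSubalgebra R n) (Set.range (artinMonomial R n))) :
    X i * m ∈ Submodule.span (esymmSubalgebra R n) (Set.range (artinMonomial R n)) := by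
  set M := Submodule.span (esymmSubalgebra R n) (Set.range (artinMonomial R n))
  induction i using WellFoundedLT.induction generalizing m with
  | ind i ih =>
  suffices ∀ a, X i * artinMonomial R n a ∈ M from
    (Submodule.span_le (p := M.comap (LinearMap.mulLeft _ (X i)))).2
      (Set.range_subset_iff.2 this) hm
  intro a
  have ha := Function.update_eq_self i a
  by_cases hlt : (a i : ℕ) + 1 < n - i
  · rw [← ha, artinMonomial_update, ← mul_assoc, ← pow_succ',
      ← artinMonomial_update a i ⟨_, hlt⟩]
    exact Submodule.subset_span ⟨_, rfl⟩
  · have htop : (a i : ℕ) + 1 = n - i := by omega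
    rw [← ha, artinMonomial_update, ← mul_assoc, ← pow_succ', htop,
      X_pow_eq_sum_esymm_tailVars, sum_mul]
    refine sum_mem fun s hs => ?_
    have hs' : n - i - (s + 1) < n - i := by rw [mem_range] at hs; omega
    rw [mul_assoc, mul_assoc, ← artinMonomial_update a i ⟨_, hs'⟩]
    have hterm := M.smul_mem ((-1 : esymmSubalgebra R n) ^ s)
      (esymm_tailVars_mul_mem (fun l hl _ hm => ih l hl hm) (s + 1)
        (Submodule.subset_span ⟨Function.update a i ⟨_, hs'⟩, rfl⟩))
    rwa [Subalgebra.smul_def, SubmonoidClass.coe_pow, NegMemClass.coe_neg, OneMemClass.coe_one]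
      at hterm

theorem span_artinMonomial_eq_top :
    Submodule.span (esymmSubalgebra R n) (Set.range (artinMonomial R n)) = ⊤ := by
  have hone : (1 : MvPolynomial (Fin n) R) ∈
      Submodule.span (esymmSubalgebra R n) (Set.range (artinMonomial R n)) :=
    Submodule.subset_span ⟨fun i => ⟨0, by omega⟩, by simp [artinMonomial]⟩
  refine Submodule.eq_top_iff'.2 fun p => ?_
  simpa using mul_mem_of_forall_X_mul_mem (fun i _ => X_mul_mem_span_artinMonomial i) p hone

theorem linearIndependent_artinMonomial [IsDomain R] :
    LinearIndependent (esymmSubalgebra R n) (artinMonomial R n) := by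
  set K := FractionRing (MvPolynomial (Fin n) R)
  have hA : ∀ p ∈ esymmSubalgebra R n,
      algebraMap _ K p ∈ FixedPoints.subfield (Equiv.Perm (Fin n)) K := fun p hp =>
    algebraMap_mem_fixedPoints_of_isSymmetric (esymmSubalgebra_le_symmetricSubalgebra R n hp)
  have hspan : ⊤ ≤ Submodule.span (FixedPoints.subfield (Equiv.Perm (Fin n)) K)
      (Set.range (algebraMap _ K ∘ artinMonomial R n)) := by
    rw [← span_range_algebraMap_eq_top (MvPolynomial (Fin n) R)]
    exact Submodule.span_le.2 (range_subset_span_comp_of_span_eq_top hA span_artinMonomial_eq_top)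
  refine LinearIndependent.of_comp_of_map_mem hA (IsFractionRing.injective _ K)
    (linearIndependent_of_top_le_span_of_card_eq_finrank hspan ?_)
  rw [card_artinExponent, finrank_fixedPoints_fractionRing, Fintype.card_fin]

variable (R n)

def artinBasis [IsDomain R] :
    Module.Basis (ArtinExponent n) (esymmSubalgebra R n) (MvPolynomial (Fin n) R) :=
  .mk linearIndependent_artinMonomial span_artinMonomial_eq_top.ge

end

end MvPolynomial

/-- `k[t_1,...,t_ℓ]` is a free module of rank `ℓ!` over its subring generated by the
elementary symmetric polynomials. -/
theorem free_of_rank_factorial_over_symmetric (k : Type*) [Field k] (ℓ : ℕ) :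
    Nonempty (Module.Basis (Fin (Nat.factorial ℓ))
      (Algebra.adjoin k (Set.range fun i : Fin ℓ => esymm (Fin ℓ) k ((i : ℕ) + 1)))
      (MvPolynomial (Fin ℓ) k)) :=
  ⟨(artinBasis k ℓ).reindex (Fintype.equivFinOfCardEq card_artinExponent)⟩
end

section
/- Let S = F_2[t_1,...,t_ℓ] with elementary symmetric polynomials c_1,...,c_ℓ. There is an isomorphism of graded F_2-vector spaces (c_1,...,c_ℓ)/(c_1^2,...,c_ℓ^2) ≅ Λ^+(c_1,...,c_ℓ) ⊗_{F_2} S/(c_1,...,c_ℓ), where Λ^+(c_1,...,c_ℓ) denotes the F_2-span of the squarefree monomials c_{i_1}···c_{i_k} with 1 ≤ i_1 < ... < i_k ≤ ℓ, k ≥ 1. Equivalently, the images of the products c_{i_1}···c_{i_k}·m, where m ranges over a monomial basis of the coinvariant algebra S/(c_1,...,c_ℓ), form an F_2-basis of the quotient of ideals. -/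
/-!
Over `ZMod 2` every polynomial is uniquely `g = ∑ ε, g_ε ^ 2 * ∏ i ∈ ε, X i` (split each exponent
into its half and its parity), and `(f ^ 2 * g)_ε = f * g_ε`. Hence `g ∈ (c_i ^ 2)` iff every
`g_ε ∈ (c_i)`, so `S ⧸ (c_i ^ 2) ≅ (S ⧸ (c_i)) ^ (2 ^ ℓ)`; this is finite-dimensional because
`X_i ^ ℓ ∈ (c_i)` (evaluate `∏ j, (T + X_j) = ∑ k, c_k T ^ (ℓ - k)` at `T = -X_i`).

On the other hand the `2 ^ ℓ * dim (S ⧸ (c_i))` classes of `(∏ i ∈ T, c_i) * m_j` span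
`S ⧸ (c_i ^ 2)`, by downward induction on `T`: modulo `(c_i)` a cofactor is a combination of
the `m_j`, and the error term `g * c_i` either vanishes (if `i ∈ T`, as `c_i ^ 2` then divides
the product) or enlarges `T`. Counting dimensions makes the family a basis, and the same
induction started at `T = {i}` shows that its members with `T ≠ ∅` span the image of `(c_i)`.
-/

open MvPolynomial

theorem Ideal.sq_mem_span_sq {A κ : Type*} [CommRing A] [CharP A 2] {f : κ → A} {x : A}
    (hx : x ∈ Ideal.span (Set.range f)) : x ^ 2 ∈ Ideal.span (Set.range fun i => f i ^ 2) := by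
  induction hx using Submodule.span_induction with
  | mem _ h => obtain ⟨i, rfl⟩ := h; exact Ideal.subset_span ⟨i, rfl⟩
  | zero => simp
  | add x y _ _ hx hy => rw [CharTwo.add_sq]; exact add_mem hx hy
  | smul a x _ hx => rw [smul_eq_mul, mul_pow]; exact Ideal.mul_mem_left _ _ hx

section ProdMulSpan

variable {K A κ ι : Type*} [CommRing K] [CommRing A] [Algebra K A] {f : κ → A} {m : ι → A}

lemma Ideal.prod_mul_mul_mem_span_sq {T : Finset κ} {i : κ} (hi : i ∈ T) (g : A) :
    (∏ j ∈ T, f j) * (g * f i) ∈ Ideal.span (Set.range fun i => f i ^ 2) := by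
  classical
  rw [← Finset.mul_prod_erase T f hi, show f i * (∏ j ∈ T.erase i, f j) * (g * f i) =
    (∏ j ∈ T.erase i, f j) * g * f i ^ 2 by ring]
  exact Ideal.mul_mem_left _ _ (Ideal.subset_span ⟨i, rfl⟩)

lemma Submodule.span_range_sup_restrictScalars_eq_top {I : Ideal A}
    (hm : Submodule.span K (Set.range fun j => Ideal.Quotient.mk I (m j)) = ⊤) :
    Submodule.span K (Set.range m) ⊔ I.restrictScalars K = ⊤ := by
  have hker : LinearMap.ker (Ideal.Quotient.mkₐ K I).toLinearMap = I.restrictScalars K := by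
    ext; simp [Ideal.Quotient.eq_zero_iff_mem]
  have := Submodule.comap_map_eq (Ideal.Quotient.mkₐ K I).toLinearMap (Submodule.span K (Set.range m))
  rw [Submodule.map_span, ← Set.range_comp] at this
  simp_all [Function.comp_def]

variable [Fintype κ]

local notation "J" => Ideal.span (Set.range fun i => f i ^ 2)

lemma Ideal.mk_prod_mul_mem_span_image_superset
    (hm : Submodule.span K (Set.range fun j => Ideal.Quotient.mk (Ideal.span (Set.range f)) (m j))
      = ⊤) (T : Finset κ) (s : A) :
    Ideal.Quotient.mk J ((∏ i ∈ T, f i) * s) ∈ Submodule.span K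
      ((fun x : Finset κ × ι => Ideal.Quotient.mk J ((∏ i ∈ x.1, f i) * m x.2)) ''
        {x | T ⊆ x.1}) := by
  classical
  revert s
  induction hk : Fintype.card κ - T.card using Nat.strong_induction_on generalizing T with
  | _ k ih =>
    let φ : A →ₗ[K] A ⧸ J :=
      (Ideal.Quotient.mkₐ K J).toLinearMap ∘ₗ LinearMap.mulLeft K (∏ i ∈ T, f i)
    suffices ⊤ ≤ (Submodule.span K _).comap φ from fun s => this Submodule.mem_top
    rw [← Submodule.span_range_sup_restrictScalars_eq_top hm, sup_le_iff, Submodule.span_le]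
    refine ⟨?_, fun y hy => ?_⟩
    · rintro _ ⟨j, rfl⟩
      exact Submodule.subset_span ⟨(T, j), Finset.Subset.refl T, rfl⟩
    obtain ⟨g, rfl⟩ := Ideal.mem_span_range_iff_exists_fun.mp hy
    simp only [Submodule.mem_comap, map_sum]
    refine Submodule.sum_mem _ fun i _ => ?_
    by_cases hi : i ∈ T
    · have hφ : φ (g i * f i) = 0 :=
        Ideal.Quotient.eq_zero_iff_mem.mpr (Ideal.prod_mul_mul_mem_span_sq hi (g i))
      rw [hφ]
      exact zero_mem _
    · have hφ : φ (g i * f i) = Ideal.Quotient.mk J ((∏ j ∈ insert i T, f j) * g i) := by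
        simp only [φ, LinearMap.comp_apply, LinearMap.mulLeft_apply, AlgHom.toLinearMap_apply,
          Ideal.Quotient.mkₐ_eq_mk, Finset.prod_insert hi]
        ring_nf
      have hcard : Fintype.card κ - (insert i T).card < k := by
        have := (insert i T).card_le_univ
        rw [Finset.card_insert_of_notMem hi] at this ⊢
        omega
      rw [hφ]
      refine Submodule.span_mono (Set.image_mono fun x hx => ?_) (ih _ hcard (insert i T) rfl (g i))
      exact (Finset.subset_insert i T).trans hx

lemma Ideal.span_mk_prod_mul_eq_top
    (hm : Submodule.span K (Set.range fun j => Ideal.Quotient.mk (Ideal.span (Set.range f)) (m j))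
      = ⊤) :
    Submodule.span K (Set.range fun x : Finset κ × ι =>
      Ideal.Quotient.mk J ((∏ i ∈ x.1, f i) * m x.2)) = ⊤ := by
  refine eq_top_iff.2 fun y _ => ?_
  obtain ⟨s, rfl⟩ := Ideal.Quotient.mk_surjective y
  have := Ideal.mk_prod_mul_mem_span_image_superset hm ∅ s
  rw [Finset.prod_empty, one_mul] at this
  exact Submodule.span_mono (Set.image_subset_range _ _) this

lemma Ideal.span_mk_prod_mul_nonempty
    (hm : Submodule.span K (Set.range fun j => Ideal.Quotient.mk (Ideal.span (Set.range f)) (m j))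
      = ⊤) :
    Submodule.span K (Set.range fun x : {T : Finset κ // T.Nonempty} × ι =>
      Ideal.Quotient.mk J ((∏ i ∈ x.1.1, f i) * m x.2)) =
      ((Ideal.span (Set.range f)).map (Ideal.Quotient.mk J)).restrictScalars K := by
  refine le_antisymm (Submodule.span_le.2 ?_) fun y hy => ?_
  · rintro _ ⟨⟨⟨T, i, hi⟩, j⟩, rfl⟩
    have hmem : (∏ i ∈ T, f i) * m j ∈ Ideal.span (Set.range f) := by
      classical
      rw [← Finset.mul_prod_erase T f hi, mul_assoc]
      exact Ideal.mul_mem_right _ _ (Ideal.subset_span ⟨i, rfl⟩)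
    exact Ideal.mem_map_of_mem (Ideal.Quotient.mk J) hmem
  rw [Submodule.restrictScalars_mem,
    Ideal.mem_map_iff_of_surjective _ Ideal.Quotient.mk_surjective] at hy
  obtain ⟨_, hy, rfl⟩ := hy
  obtain ⟨g, rfl⟩ := Ideal.mem_span_range_iff_exists_fun.mp hy
  rw [map_sum]
  refine Submodule.sum_mem _ fun i _ => ?_
  have := Ideal.mk_prod_mul_mem_span_image_superset hm {i} (g i)
  rw [Finset.prod_singleton, mul_comm] at this
  refine Submodule.span_mono ?_ this
  rintro _ ⟨x, hx, rfl⟩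
  exact ⟨(⟨x.1, i, hx (Finset.mem_singleton_self i)⟩, x.2), rfl⟩

end ProdMulSpan

namespace MvPolynomial

variable {σ R : Type*}

noncomputable def onesOn (ε : Finset σ) : σ →₀ ℕ := Finsupp.indicator ε fun _ _ => 1

lemma onesOn_apply [DecidableEq σ] (ε : Finset σ) (i : σ) :
    onesOn ε i = if i ∈ ε then 1 else 0 := by
  simp [onesOn, Finsupp.indicator_apply]

lemma bijective_two_smul_add_onesOn :
    Function.Bijective fun p : (σ →₀ ℕ) × Finset σ => 2 • p.1 + onesOn p.2 := by
  classical
  refine ⟨fun p q hpq => ?_, fun a => ?_⟩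
  · have hi (i : σ) := DFunLike.congr_fun hpq i
    simp only [Finsupp.add_apply, Finsupp.smul_apply, smul_eq_mul, onesOn_apply] at hi
    refine Prod.ext (Finsupp.ext fun i => ?_) (Finset.ext fun i => ?_) <;>
      have := hi i <;> split_ifs at this <;> simp_all <;> omega
  · refine ⟨(Finsupp.mapRange (· / 2) (Nat.zero_div 2) a, {i ∈ a.support | a i % 2 = 1}), ?_⟩
    ext i
    simp only [Finsupp.add_apply, Finsupp.smul_apply, smul_eq_mul, onesOn_apply,
      Finsupp.mapRange_apply, Finset.mem_filter, Finsupp.mem_support_iff]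
    split_ifs <;> omega

lemma two_smul_add_onesOn_injective (ε : Finset σ) :
    Function.Injective fun b : σ →₀ ℕ => 2 • b + onesOn ε := fun b c h => by
  have : ((b, ε) : (σ →₀ ℕ) × Finset σ) = (c, ε) := bijective_two_smul_add_onesOn.1 h
  exact congrArg Prod.fst this

variable [CommSemiring R]

/-- The coordinates of `g = ∑ ε, frobeniusCoord ε g ^ 2 * ∏ i ∈ ε, X i` when `R = ZMod 2`, i.e.
of `MvPolynomial σ R` as a free module over its subring of squares. -/
noncomputable def frobeniusCoord (ε : Finset σ) : MvPolynomial σ R →ₗ[R] MvPolynomial σ R :=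
  (AddMonoidAlgebra.coeffLinearEquiv R).symm.toLinearMap ∘ₗ
    Finsupp.lcomapDomain _ (two_smul_add_onesOn_injective ε) ∘ₗ
    (AddMonoidAlgebra.coeffLinearEquiv R).toLinearMap

lemma coeff_frobeniusCoord (ε : Finset σ) (g : MvPolynomial σ R) (b : σ →₀ ℕ) :
    coeff b (frobeniusCoord ε g) = coeff (2 • b + onesOn ε) g :=
  rfl

lemma frobeniusCoord_monomial [DecidableEq σ] (ε δ : Finset σ) (b : σ →₀ ℕ) (r : R) :
    frobeniusCoord ε (monomial (2 • b + onesOn δ) r) = if δ = ε then monomial b r else 0 := by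
  ext c
  have hinj : 2 • b + onesOn δ = 2 • c + onesOn ε ↔ b = c ∧ δ = ε :=
    (bijective_two_smul_add_onesOn.1.eq_iff (a := (b, δ)) (b := (c, ε))).trans Prod.mk_inj
  rw [coeff_frobeniusCoord, coeff_monomial, apply_ite (coeff c), coeff_monomial, coeff_zero]
  by_cases hδ : δ = ε <;> by_cases hb : b = c <;> simp_all

lemma frobeniusCoord_monomial_onesOn [DecidableEq σ] (ε δ : Finset σ) :
    frobeniusCoord ε (monomial (onesOn δ) (1 : R)) = if δ = ε then 1 else 0 := by
  simpa using frobeniusCoord_monomial ε δ 0 (1 : R)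

lemma monomial_sq_zmod_two (a : σ →₀ ℕ) (r : ZMod 2) : monomial a r ^ 2 = monomial (2 • a) r := by
  rw [monomial_pow, ZMod.pow_card]

lemma sum_frobeniusCoord_sq_mul [Fintype σ] (g : MvPolynomial σ (ZMod 2)) :
    ∑ ε, frobeniusCoord ε g ^ 2 * monomial (onesOn ε) 1 = g := by
  induction g using MvPolynomial.induction_on' with
  | monomial a r =>
    classical
    obtain ⟨⟨b, δ⟩, rfl⟩ := bijective_two_smul_add_onesOn.2 a
    simp [frobeniusCoord_monomial, monomial_sq_zmod_two, monomial_mul]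
  | add p q hp hq =>
    simp only [map_add, CharTwo.add_sq, add_mul, Finset.sum_add_distrib, hp, hq]

lemma frobeniusCoord_sq_mul (ε : Finset σ) (f g : MvPolynomial σ (ZMod 2)) :
    frobeniusCoord ε (f ^ 2 * g) = f * frobeniusCoord ε g := by
  induction f using MvPolynomial.induction_on' with
  | monomial c r =>
    induction g using MvPolynomial.induction_on' with
    | monomial a s =>
      classical
      obtain ⟨⟨b, δ⟩, rfl⟩ := bijective_two_smul_add_onesOn.2 a
      rw [monomial_sq_zmod_two, monomial_mul, ← add_assoc, ← smul_add, frobeniusCoord_monomial,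
        frobeniusCoord_monomial]
      split_ifs <;> simp [monomial_mul]
    | add p q hp hq => rw [mul_add, map_add, map_add, mul_add, hp, hq]
  | add p q hp hq => rw [CharTwo.add_sq, add_mul, map_add, hp, hq, add_mul]

section SpanSq

variable {κ : Type*} (f : κ → MvPolynomial σ (ZMod 2))

noncomputable def frobeniusCoordMk :
    MvPolynomial σ (ZMod 2) →ₗ[ZMod 2] Finset σ → MvPolynomial σ (ZMod 2) ⧸ Ideal.span (Set.range f) :=
  LinearMap.pi fun ε => (Ideal.Quotient.mkₐ (ZMod 2) _).toLinearMap ∘ₗ frobeniusCoord ε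

lemma frobeniusCoordMk_apply (g : MvPolynomial σ (ZMod 2)) (ε : Finset σ) :
    frobeniusCoordMk f g ε = Ideal.Quotient.mk _ (frobeniusCoord ε g) :=
  rfl

lemma frobeniusCoordMk_surjective [Fintype σ] : Function.Surjective (frobeniusCoordMk f) := by
  classical
  intro v
  choose g hg using fun ε => Ideal.Quotient.mk_surjective (v ε)
  refine ⟨∑ ε, g ε ^ 2 * monomial (onesOn ε) 1, ?_⟩
  ext δ
  simp [frobeniusCoordMk_apply, frobeniusCoord_sq_mul, frobeniusCoord_monomial_onesOn, hg]

variable [Fintype κ]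

lemma frobeniusCoord_mem_span_of_mem_span_sq {g : MvPolynomial σ (ZMod 2)}
    (hg : g ∈ Ideal.span (Set.range fun i => f i ^ 2)) (ε : Finset σ) :
    frobeniusCoord ε g ∈ Ideal.span (Set.range f) := by
  obtain ⟨c, rfl⟩ := Ideal.mem_span_range_iff_exists_fun.mp hg
  simp only [map_sum, mul_comm (c _), frobeniusCoord_sq_mul]
  exact Ideal.sum_mem _ fun i _ => Ideal.mul_mem_right _ _ (Ideal.subset_span ⟨i, rfl⟩)

variable [Fintype σ]

lemma mem_span_sq_iff {g : MvPolynomial σ (ZMod 2)} :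
    g ∈ Ideal.span (Set.range fun i => f i ^ 2) ↔
      ∀ ε, frobeniusCoord ε g ∈ Ideal.span (Set.range f) := by
  refine ⟨frobeniusCoord_mem_span_of_mem_span_sq f, fun h => ?_⟩
  rw [← sum_frobeniusCoord_sq_mul g]
  exact Ideal.sum_mem _ fun ε _ => Ideal.mul_mem_right _ _ (Ideal.sq_mem_span_sq (h ε))

lemma ker_frobeniusCoordMk :
    LinearMap.ker (frobeniusCoordMk f) =
      (Ideal.span (Set.range fun i => f i ^ 2)).restrictScalars (ZMod 2) := by
  ext g
  rw [LinearMap.mem_ker, Submodule.restrictScalars_mem, mem_span_sq_iff]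
  simp only [_root_.funext_iff, frobeniusCoordMk_apply, Pi.zero_apply,
    Ideal.Quotient.eq_zero_iff_mem]

noncomputable def quotSpanSqEquiv :
    (MvPolynomial σ (ZMod 2) ⧸ Ideal.span (Set.range fun i => f i ^ 2)) ≃ₗ[ZMod 2]
      (Finset σ → MvPolynomial σ (ZMod 2) ⧸ Ideal.span (Set.range f)) :=
  (Submodule.Quotient.restrictScalarsEquiv (ZMod 2) _).symm ≪≫ₗ
    Submodule.quotEquivOfEq _ _ (ker_frobeniusCoordMk f).symm ≪≫ₗ
    (frobeniusCoordMk f).quotKerEquivOfSurjective (frobeniusCoordMk_surjective f)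

end SpanSq

variable [Fintype σ]

theorem linearIndependent_mk_prod_mul {ι : Type*} [Fintype ι]
    (f : σ → MvPolynomial σ (ZMod 2)) (m : ι → MvPolynomial σ (ZMod 2))
    (b : Module.Basis ι (ZMod 2) (MvPolynomial σ (ZMod 2) ⧸ Ideal.span (Set.range f)))
    (hb : ∀ j, b j = Ideal.Quotient.mk _ (m j)) :
    LinearIndependent (ZMod 2) fun x : Finset σ × ι =>
      Ideal.Quotient.mk (Ideal.span (Set.range fun i => f i ^ 2)) ((∏ i ∈ x.1, f i) * m x.2) := by
  have := Module.Finite.of_basis b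
  refine linearIndependent_of_top_le_span_of_card_eq_finrank
    (Ideal.span_mk_prod_mul_eq_top (_root_.funext hb ▸ b.span_eq)).ge ?_
  rw [(quotSpanSqEquiv f).finrank_eq, Module.finrank_pi_fintype, Module.finrank_eq_card_basis b]
  simp [Fintype.card_finset]

theorem X_pow_card_mem_of_esymm_mem {R : Type*} [CommRing R] {I : Ideal (MvPolynomial σ R)}
    (h : ∀ k ∈ Finset.Icc 1 (Fintype.card σ), esymm σ R k ∈ I) (i : σ) :
    X i ^ Fintype.card σ ∈ I := by
  have hroot := congrArg (Polynomial.eval (-X i)) (prod_C_add_X_eq_sum_esymm R σ)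
  rw [Polynomial.eval_prod, Finset.prod_eq_zero (Finset.mem_univ i) (by simp),
    Polynomial.eval_finsetSum, Finset.sum_range_succ'] at hroot
  simp only [Polynomial.eval_mul, Polynomial.eval_C, Polynomial.eval_pow, Polynomial.eval_X,
    esymm_zero, one_mul, Nat.sub_zero] at hroot
  have hneg : (-X i) ^ Fintype.card σ ∈ I := by
    rw [eq_neg_of_add_eq_zero_right hroot.symm]
    refine neg_mem (Ideal.sum_mem _ fun k hk => Ideal.mul_mem_right _ _ (h _ ?_))
    simp only [Finset.mem_range, Finset.mem_Icc] at hk ⊢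
    omega
  simpa [← mul_pow] using Ideal.mul_mem_left I ((-1) ^ Fintype.card σ) hneg

theorem finite_quotient_of_X_pow_mem {R : Type*} [CommRing R] {I : Ideal (MvPolynomial σ R)}
    {n : ℕ} (h : ∀ i, X i ^ n ∈ I) : Module.Finite R (MvPolynomial σ R ⧸ I) := by
  have : Algebra.IsIntegral R (MvPolynomial σ R ⧸ I) := by
    rw [← integralClosure_eq_top_iff, eq_top_iff, ← (Ideal.Quotient.mkₐ R I).range_eq_top.2
      (Ideal.Quotient.mkₐ_surjective R I), ← Algebra.map_top, ← adjoin_range_X,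
      AlgHom.map_adjoin, ← Set.range_comp]
    refine Algebra.adjoin_le (Set.range_subset_iff.2 fun i => ?_)
    refine ⟨Polynomial.X ^ n, Polynomial.monic_X_pow n, ?_⟩
    simp [← map_pow, Ideal.Quotient.eq_zero_iff_mem.2 (h i)]
  exact Algebra.IsIntegral.finite

end MvPolynomial

/-- For `S = F_2[t_1,...,t_ℓ]` with elementary symmetric polynomials `c_i`, the quotient of
ideals `(c_1,...,c_ℓ)/(c_1^2,...,c_ℓ^2)` is isomorphic to `Λ⁺(c_1,...,c_ℓ) ⊗ S/(c_1,...,c_ℓ)`: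
given any family `m` whose images form a basis of the coinvariant algebra `S/(c_1,...,c_ℓ)`,
the images of the products `(∏_{i ∈ T} c_i)·m_j` (over nonempty `T ⊆ {1,...,ℓ}`) in
`S/(c_1^2,...,c_ℓ^2)` are linearly independent and span the image of the ideal
`(c_1,...,c_ℓ)` there. -/
theorem D_of_split_SO (ℓ : ℕ) (ι : Type*) (m : ι → MvPolynomial (Fin ℓ) (ZMod 2))
    (bm : Module.Basis ι (ZMod 2) (MvPolynomial (Fin ℓ) (ZMod 2) ⧸
      Ideal.span (Set.range fun i : Fin ℓ => esymm (Fin ℓ) (ZMod 2) ((i : ℕ) + 1))))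
    (hbm : ∀ j : ι, bm j = Ideal.Quotient.mk _ (m j)) :
    LinearIndependent (ZMod 2)
      (fun x : {T : Finset (Fin ℓ) // T.Nonempty} × ι =>
        Ideal.Quotient.mk
          (Ideal.span (Set.range fun i : Fin ℓ => esymm (Fin ℓ) (ZMod 2) ((i : ℕ) + 1) ^ 2))
          ((∏ i ∈ x.1.1, esymm (Fin ℓ) (ZMod 2) ((i : ℕ) + 1)) * m x.2)) ∧
    Submodule.span (ZMod 2)
      (Set.range fun x : {T : Finset (Fin ℓ) // T.Nonempty} × ι =>
        Ideal.Quotient.mk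
          (Ideal.span (Set.range fun i : Fin ℓ => esymm (Fin ℓ) (ZMod 2) ((i : ℕ) + 1) ^ 2))
          ((∏ i ∈ x.1.1, esymm (Fin ℓ) (ZMod 2) ((i : ℕ) + 1)) * m x.2))
      = Submodule.restrictScalars (ZMod 2)
          (Ideal.map
            (Ideal.Quotient.mk
              (Ideal.span (Set.range fun i : Fin ℓ => esymm (Fin ℓ) (ZMod 2) ((i : ℕ) + 1) ^ 2)))
            (Ideal.span (Set.range fun i : Fin ℓ => esymm (Fin ℓ) (ZMod 2) ((i : ℕ) + 1)))) := by
  have hX (i : Fin ℓ) : X i ^ ℓ ∈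
      Ideal.span (Set.range fun i : Fin ℓ => esymm (Fin ℓ) (ZMod 2) ((i : ℕ) + 1)) := by
    have := X_pow_card_mem_of_esymm_mem (R := ZMod 2)
      (I := Ideal.span (Set.range fun i : Fin ℓ => esymm (Fin ℓ) (ZMod 2) ((i : ℕ) + 1)))
      (fun k hk => ?_) i
    · rwa [Fintype.card_fin] at this
    rw [Finset.mem_Icc, Fintype.card_fin] at hk
    obtain ⟨j, rfl⟩ : ∃ j, k = j + 1 := ⟨k - 1, by omega⟩
    exact Ideal.subset_span ⟨⟨j, by omega⟩, rfl⟩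
  have := finite_quotient_of_X_pow_mem hX
  have : Fintype ι := @Fintype.ofFinite ι (Module.Finite.finite_basis bm)
  have hind := linearIndependent_mk_prod_mul _ m bm hbm
  exact ⟨hind.comp (Prod.map Subtype.val id) (Subtype.val_injective.prodMap Function.injective_id),
    Ideal.span_mk_prod_mul_nonempty (_root_.funext hbm ▸ bm.span_eq)⟩
end

section
/- Let S = F_3[t_1,t_2] with c_1 = t_1 + t_2 and c_2 = t_1 t_2. Then there is an isomorphism of graded F_3-vector spaces (c_1^2, c_1c_2, c_2^2)/(c_1^2, c_1^3, c_2^3) ≅ F_3{c_1c_2, c_2^2, c_1c_2^2} ⊗_{F_3} S/(c_1,c_2), where F_3{c_1c_2, c_2^2, c_1c_2^2} is the 3-dimensional F_3-vector space with the indicated basis and S/(c_1,c_2) is the coinvariant algebra. -/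
/-!
Put `σ₁ = X₀ + X₁`, `σ₂ = X₀X₁`, `I₃ = (σ₁², σ₁³, σ₂³)` and `J = (σ₁, σ₂)`. Everything is read off
from the substitution `f ↦ f(t, ε - t)` into the dual numbers over `𝔽₃[t]`. It sends `σ₁ ↦ ε` and
`σ₂ ↦ tε - t²`, so `σ₂³ ↦ -t⁶` because `3 = 0`, and `I₃` lands in `t⁶ · 𝔽₃[t][ε]`; moreover
`f ∈ J` iff `t² ∣ f(t, -t)`. Since `σ₁σ₂ ↦ -t²ε`, `σ₂² ↦ t⁴ - 2t³ε` and `σ₁σ₂² ↦ t⁴ε`, a relation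
`σ₁σ₂ p + σ₂² q + σ₁σ₂² r ∈ I₃` forces `p, q ∈ J`, and `σ₁σ₂² r ∈ I₃` forces `r ∈ J`: this is a
triangular system, whence linear independence. For spanning, `σ₁σ₂ J` and `σ₂² J` lie in
`σ₁σ₂² S + I₃` while `σ₁σ₂² J ⊆ I₃`, so lifts of a basis of `S / J` suffice.
-/

open MvPolynomial

section LiftedBasis

variable {K A ι κ : Type*} [CommRing K] [CommRing A] [Algebra K A] {I J : Ideal A} {m : ι → A}

theorem Finsupp.linearCombination_mul_prod [Fintype κ] (a : κ → A) (v : ι → A)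
    (l : κ × ι →₀ K) :
    Finsupp.linearCombination K (fun x : κ × ι => a x.1 * v x.2) l
      = ∑ i, a i * Finsupp.linearCombination K v (l.curry i) := by
  simp only [Finsupp.linearCombination_apply, Finsupp.mul_sum, mul_smul_comm]
  rw [← Finsupp.sum_curry_index l fun i j c => c • (a i * v j), Finsupp.sum_fintype]
  exact fun _ => Finsupp.sum_zero_index

theorem Ideal.Quotient.mk_linearCombination (v : ι → A) (l : ι →₀ K) :
    Ideal.Quotient.mk I (Finsupp.linearCombination K v l)
      = Finsupp.linearCombination K (fun i => Ideal.Quotient.mk I (v i)) l :=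
  Finsupp.apply_linearCombination K (Ideal.Quotient.mkₐ K I).toLinearMap v l

theorem linearCombination_mem_iff_of_basis (b : Module.Basis ι K (A ⧸ J))
    (hb : ∀ j, b j = Ideal.Quotient.mk J (m j)) (l : ι →₀ K) :
    Finsupp.linearCombination K m l ∈ J ↔ l = 0 := by
  rw [← Ideal.Quotient.eq_zero_iff_mem, Ideal.Quotient.mk_linearCombination, ← funext hb]
  exact ⟨linearIndependent_iff.mp b.linearIndependent l, by rintro rfl; exact map_zero _⟩

theorem exists_sub_linearCombination_mem_of_basis (b : Module.Basis ι K (A ⧸ J))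
    (hb : ∀ j, b j = Ideal.Quotient.mk J (m j)) (f : A) :
    ∃ l : ι →₀ K, f - Finsupp.linearCombination K m l ∈ J := by
  refine ⟨b.repr (Ideal.Quotient.mk J f), ?_⟩
  rw [← Ideal.Quotient.eq_zero_iff_mem, map_sub, Ideal.Quotient.mk_linearCombination, ← funext hb,
    b.linearCombination_repr, sub_self]

theorem linearIndependent_mk_mul_of_basis [Fintype κ] [DecidableEq κ]
    (b : Module.Basis ι K (A ⧸ J)) (hb : ∀ j, b j = Ideal.Quotient.mk J (m j)) (a : κ → A) (k : κ)
    (h_ne : ∀ p : κ → A, ∑ i, a i * p i ∈ I → ∀ i ≠ k, p i ∈ J)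
    (h_k : ∀ r, a k * r ∈ I → r ∈ J) :
    LinearIndependent K (fun x : κ × ι => Ideal.Quotient.mk I (a x.1 * m x.2)) := by
  rw [linearIndependent_iff]
  intro l hl
  have hI : ∑ i, a i * Finsupp.linearCombination K m (l.curry i) ∈ I := by
    rwa [← Finsupp.linearCombination_mul_prod, ← Ideal.Quotient.eq_zero_iff_mem,
      Ideal.Quotient.mk_linearCombination]
  have hcurry_ne : ∀ i ≠ k, l.curry i = 0 := fun i hi =>
    (linearCombination_mem_iff_of_basis b hb _).mp (h_ne _ hI i hi)
  have hcurry_k : l.curry k = 0 := by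
    rw [Finset.sum_eq_single k (fun i _ hi => by rw [hcurry_ne i hi, map_zero, mul_zero])
      (by simp)] at hI
    exact (linearCombination_mem_iff_of_basis b hb _).mp (h_k _ hI)
  ext ⟨i, j⟩
  rw [← Finsupp.curry_apply]
  obtain rfl | hi := eq_or_ne i k
  · rw [hcurry_k, Finsupp.zero_apply, Finsupp.zero_apply]
  · rw [hcurry_ne i hi, Finsupp.zero_apply, Finsupp.zero_apply]

theorem mk_mul_linearCombination_mem_span (a : κ → A) (i : κ) (l : ι →₀ K) :
    Ideal.Quotient.mk I (a i * Finsupp.linearCombination K m l)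
      ∈ Submodule.span K (Set.range fun x : κ × ι => Ideal.Quotient.mk I (a x.1 * m x.2)) := by
  have hmul : a i * Finsupp.linearCombination K m l
      = Finsupp.linearCombination K (fun j => a i * m j) l := by
    simp only [Finsupp.linearCombination_apply, Finsupp.mul_sum, mul_smul_comm]
  rw [hmul, Ideal.Quotient.mk_linearCombination]
  refine Submodule.span_mono (s := Set.range fun j => Ideal.Quotient.mk I (a i * m j)) ?_ ?_
  · rintro - ⟨j, rfl⟩
    exact ⟨(i, j), rfl⟩
  · rw [← Finsupp.range_linearCombination]
    exact LinearMap.mem_range_self _ l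

theorem span_range_mk_mul_eq_map_of_basis [Fintype κ]
    (b : Module.Basis ι K (A ⧸ J)) (hb : ∀ j, b j = Ideal.Quotient.mk J (m j)) (a : κ → A) (k : κ)
    (h_k : ∀ g ∈ J, a k * g ∈ I) (h_red : ∀ i, ∀ g ∈ J, ∃ h, a i * g - a k * h ∈ I) :
    Submodule.span K (Set.range fun x : κ × ι => Ideal.Quotient.mk I (a x.1 * m x.2))
      = (Ideal.map (Ideal.Quotient.mk I) (Ideal.span (Set.range a))).restrictScalars K := by
  set T := Submodule.span K (Set.range fun x : κ × ι => Ideal.Quotient.mk I (a x.1 * m x.2))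
  have hmem_k : ∀ f, Ideal.Quotient.mk I (a k * f) ∈ T := by
    intro f
    obtain ⟨l, hl⟩ := exists_sub_linearCombination_mem_of_basis b hb f
    rw [← sub_add_cancel f (Finsupp.linearCombination K m l), mul_add, map_add,
      Ideal.Quotient.eq_zero_iff_mem.mpr (h_k _ hl), zero_add]
    exact mk_mul_linearCombination_mem_span a k l
  have hmem : ∀ i f, Ideal.Quotient.mk I (a i * f) ∈ T := by
    intro i f
    obtain ⟨l, hl⟩ := exists_sub_linearCombination_mem_of_basis b hb f
    obtain ⟨h, hh⟩ := h_red i _ hl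
    have hsplit : Ideal.Quotient.mk I (a i * f) = Ideal.Quotient.mk I
        (a i * Finsupp.linearCombination K m l) + Ideal.Quotient.mk I (a k * h) := by
      rw [← map_add, Ideal.Quotient.eq]
      convert hh using 1
      ring
    rw [hsplit]
    exact add_mem (mk_mul_linearCombination_mem_span a i l) (hmem_k h)
  apply le_antisymm
  · rw [Submodule.span_le]
    rintro - ⟨⟨i, j⟩, rfl⟩
    exact Ideal.mem_map_of_mem _ (Ideal.mul_mem_right _ _ (Ideal.subset_span ⟨i, rfl⟩))
  · intro z hz
    obtain ⟨y, hy, rfl⟩ := (Ideal.mem_map_iff_of_surjective _ Ideal.Quotient.mk_surjective).mp hz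
    obtain ⟨f, rfl⟩ := Ideal.mem_span_range_iff_exists_fun.mp hy
    rw [map_sum]
    exact Submodule.sum_mem _ fun i _ => mul_comm (f i) (a i) ▸ hmem i (f i)

end LiftedBasis

theorem pow_add_dvd_pow_mul_iff {M : Type*} [CommMonoidWithZero M] [IsCancelMulZero M] {x : M}
    (hx : x ≠ 0) (n k : ℕ) {y : M} : x ^ (n + k) ∣ x ^ n * y ↔ x ^ k ∣ y := by
  rw [pow_add, mul_dvd_mul_iff_left (pow_ne_zero n hx)]

open DualNumber TrivSqZeroExt

theorem DualNumber.dvd_fst_and_dvd_snd_of_mem_span {R : Type*} [CommRing R] {p : R} {x : R[ε]}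
    (hx : x ∈ Ideal.span {inl p}) : p ∣ x.fst ∧ p ∣ x.snd := by
  obtain ⟨a, rfl⟩ := Ideal.mem_span_singleton'.mp hx
  exact ⟨⟨a.fst, by simp [mul_comm]⟩, ⟨a.snd, by simp [mul_comm]⟩⟩

theorem esymm_fin_two_one (R : Type*) [CommSemiring R] : esymm (Fin 2) R 1 = X 0 + X 1 := by
  rw [esymm_one, Fin.sum_univ_two]

theorem esymm_fin_two_two (R : Type*) [CommSemiring R] : esymm (Fin 2) R 2 = X 0 * X 1 := by
  rw [esymm, show (Finset.univ : Finset (Fin 2)).powersetCard 2 = {Finset.univ} from rfl,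
    Finset.sum_singleton, Fin.prod_univ_two]

local notation "S" => MvPolynomial (Fin 2) (ZMod 3)
local notation "σ₁" => (X 0 + X 1 : MvPolynomial (Fin 2) (ZMod 3))
local notation "σ₂" => (X 0 * X 1 : MvPolynomial (Fin 2) (ZMod 3))
local notation "I₃" => Ideal.span {σ₁ ^ 2, σ₁ ^ 3, σ₂ ^ 3}
local notation "J" => Ideal.span {σ₁, σ₂}
local notation "t" => (Polynomial.X : Polynomial (ZMod 3))

/-- The restriction of `f` to the antidiagonal `X₀ + X₁ = 0`, together with its first derivative
in `X₁` there. -/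
noncomputable def antidiagonalJet : S →ₐ[ZMod 3] DualNumber (Polynomial (ZMod 3)) :=
  aeval ![inl t, ε - inl t]

theorem antidiagonalJet_σ₁ : antidiagonalJet σ₁ = ε := by
  simp [antidiagonalJet]

theorem antidiagonalJet_σ₂ : antidiagonalJet σ₂ = inr t - inl (t ^ 2) := by
  ext <;> simp [antidiagonalJet, pow_two]

theorem antidiagonalJet_σ₂_pow_three : antidiagonalJet (σ₂ ^ 3) = -inl (t ^ 6) := by
  have h3 : (3 : DualNumber (Polynomial (ZMod 3))) = 0 := by
    refine TrivSqZeroExt.ext ?_ rfl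
    exact CharP.ofNat_eq_zero (Polynomial (ZMod 3)) 3
  have h6 : inl (t ^ 6) = (inl (t ^ 2) : DualNumber (Polynomial (ZMod 3))) ^ 3 := by
    rw [inl_pow, ← pow_mul]
  rw [map_pow, antidiagonalJet_σ₂, h6]
  linear_combination (inr t - 3 * inl (t ^ 2)) * inr_mul_inr (R := Polynomial (ZMod 3)) t t
    + inr t * inl (t ^ 2) ^ 2 * h3

theorem antidiagonalJet_mem_span_of_mem {f : S} (hf : f ∈ I₃) :
    antidiagonalJet f ∈ Ideal.span {inl (t ^ 6)} := by
  refine (Ideal.map_le_iff_le_comap.mpr ?_) (Ideal.mem_map_of_mem antidiagonalJet hf)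
  rw [Ideal.span_le]
  rintro g (rfl | rfl | rfl) <;> simp only [SetLike.mem_coe, Ideal.mem_comap]
  · simp [antidiagonalJet_σ₁]
  · simp [antidiagonalJet_σ₁, pow_succ]
  · rw [antidiagonalJet_σ₂_pow_three]
    exact neg_mem (Ideal.subset_span rfl)

theorem pow_six_dvd_antidiagonalJet_of_mem {f : S} (hf : f ∈ I₃) :
    t ^ 6 ∣ (antidiagonalJet f).fst ∧ t ^ 6 ∣ (antidiagonalJet f).snd :=
  DualNumber.dvd_fst_and_dvd_snd_of_mem_span (antidiagonalJet_mem_span_of_mem hf)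

theorem exists_sub_C_add_C_mul_X_mem (r : S) : ∃ α β : ZMod 3, r - (C α + C β * X 0) ∈ J := by
  induction r using MvPolynomial.induction_on with
  | C a => exact ⟨a, 0, by simp⟩
  | add p q hp hq =>
    obtain ⟨α, β, hpJ⟩ := hp
    obtain ⟨α', β', hqJ⟩ := hq
    refine ⟨α + α', β + β', ?_⟩
    convert add_mem hpJ hqJ using 1
    simp only [map_add]
    ring
  | mul_X p i hp =>
    obtain ⟨α, β, hpJ⟩ := hp
    have hJ : ∀ u v : S, u * σ₁ + v * σ₂ ∈ J := fun u v => Ideal.mem_span_pair.mpr ⟨u, v, rfl⟩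
    fin_cases i
    · refine ⟨0, α, ?_⟩
      convert add_mem (Ideal.mul_mem_right (X 0) _ hpJ) (hJ (C β * X 0) (-C β)) using 1
      simp only [Fin.zero_eta, map_zero]
      ring
    · refine ⟨0, -α, ?_⟩
      convert add_mem (Ideal.mul_mem_right (X 1) _ hpJ) (hJ (C α) (C β)) using 1
      simp only [Fin.mk_one, map_zero, map_neg]
      ring

theorem sq_dvd_fst_antidiagonalJet_of_mem {g : S} (hg : g ∈ J) :
    t ^ 2 ∣ (antidiagonalJet g).fst := by
  obtain ⟨u, v, rfl⟩ := Ideal.mem_span_pair.mp hg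
  exact ⟨-(antidiagonalJet v).fst, by simp [antidiagonalJet_σ₁, antidiagonalJet_σ₂]; ring⟩

theorem mem_span_σ_iff_sq_dvd (r : S) : r ∈ J ↔ t ^ 2 ∣ (antidiagonalJet r).fst := by
  refine ⟨sq_dvd_fst_antidiagonalJet_of_mem, fun h => ?_⟩
  obtain ⟨α, β, hr⟩ := exists_sub_C_add_C_mul_X_mem r
  have hlin : t ^ 2 ∣ Polynomial.C β * t + Polynomial.C α := by
    have := dvd_sub h (sq_dvd_fst_antidiagonalJet_of_mem hr)
    simpa [antidiagonalJet, algebraMap_eq_inl', Polynomial.algebraMap_eq, add_comm] using this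
  have hzero := Polynomial.eq_zero_of_dvd_of_degree_lt hlin
    (Polynomial.degree_linear_le.trans_lt (by rw [Polynomial.degree_X_pow]; norm_num))
  have hα : α = 0 := by simpa using congrArg (Polynomial.coeff · 0) hzero
  have hβ : β = 0 := by simpa using congrArg (Polynomial.coeff · 1) hzero
  simpa [hα, hβ] using hr

theorem mem_span_σ_of_σ₁_mul_σ₂_sq_mul_mem {r : S} (h : σ₁ * σ₂ ^ 2 * r ∈ I₃) : r ∈ J := by
  have hsnd : (antidiagonalJet (σ₁ * σ₂ ^ 2 * r)).snd = t ^ 4 * (antidiagonalJet r).fst := by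
    simp [antidiagonalJet_σ₁, antidiagonalJet_σ₂, ← pow_mul]
  rw [mem_span_σ_iff_sq_dvd, ← pow_add_dvd_pow_mul_iff Polynomial.X_ne_zero 4, ← hsnd]
  exact (pow_six_dvd_antidiagonalJet_of_mem h).2

theorem mem_span_σ_of_add_mem {p q r : S}
    (h : σ₁ * σ₂ * p + σ₂ ^ 2 * q + σ₁ * σ₂ ^ 2 * r ∈ I₃) : p ∈ J ∧ q ∈ J := by
  set f := σ₁ * σ₂ * p + σ₂ ^ 2 * q + σ₁ * σ₂ ^ 2 * r
  set P := antidiagonalJet p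
  set Q := antidiagonalJet q
  set R := antidiagonalJet r
  obtain ⟨hfst, hsnd⟩ := pow_six_dvd_antidiagonalJet_of_mem h
  have efst : (antidiagonalJet f).fst = t ^ 4 * Q.fst := by
    simp [f, Q, antidiagonalJet_σ₁, antidiagonalJet_σ₂, ← pow_mul]
  have esnd : (antidiagonalJet f).snd
      = -(t ^ 2 * P.fst) + t ^ 4 * (Q.snd + R.fst) - 2 * t ^ 3 * Q.fst := by
    simp [f, P, Q, R, antidiagonalJet_σ₁, antidiagonalJet_σ₂]
    ring
  have hq : q ∈ J := by
    rw [mem_span_σ_iff_sq_dvd, ← pow_add_dvd_pow_mul_iff Polynomial.X_ne_zero 4, ← efst]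
    exact hfst
  obtain ⟨k, hk⟩ := (mem_span_σ_iff_sq_dvd q).mp hq
  refine ⟨?_, hq⟩
  have hP : t ^ 2 * P.fst = t ^ 4 * (Q.snd + R.fst - 2 * t * k) - (antidiagonalJet f).snd := by
    rw [esnd, hk]
    ring
  rw [mem_span_σ_iff_sq_dvd, ← pow_add_dvd_pow_mul_iff Polynomial.X_ne_zero 2, hP]
  exact dvd_sub (dvd_mul_right _ _) ((pow_dvd_pow t (by norm_num)).trans hsnd)

theorem mul_σ₁_sq_add_mul_σ₂_cube_mem (u v : S) : u * σ₁ ^ 2 + v * σ₂ ^ 3 ∈ I₃ :=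
  add_mem (Ideal.mul_mem_left _ _ (Ideal.subset_span (by simp)))
    (Ideal.mul_mem_left _ _ (Ideal.subset_span (by simp)))

theorem σ₁_mul_σ₂_sq_mul_mem {g : S} (hg : g ∈ J) : σ₁ * σ₂ ^ 2 * g ∈ I₃ := by
  obtain ⟨u, v, rfl⟩ := Ideal.mem_span_pair.mp hg
  convert mul_σ₁_sq_add_mul_σ₂_cube_mem (σ₂ ^ 2 * u) (σ₁ * v) using 1
  ring

theorem exists_σ₁_mul_σ₂_mul_sub_mem {g : S} (hg : g ∈ J) :
    ∃ h, σ₁ * σ₂ * g - σ₁ * σ₂ ^ 2 * h ∈ I₃ := by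
  obtain ⟨u, v, rfl⟩ := Ideal.mem_span_pair.mp hg
  exact ⟨v, by convert mul_σ₁_sq_add_mul_σ₂_cube_mem (σ₂ * u) 0 using 1; ring⟩

theorem exists_σ₂_sq_mul_sub_mem {g : S} (hg : g ∈ J) :
    ∃ h, σ₂ ^ 2 * g - σ₁ * σ₂ ^ 2 * h ∈ I₃ := by
  obtain ⟨u, v, rfl⟩ := Ideal.mem_span_pair.mp hg
  exact ⟨u, by convert mul_σ₁_sq_add_mul_σ₂_cube_mem 0 v using 1; ring⟩

theorem map_span_eq_map_span_range :
    Ideal.map (Ideal.Quotient.mk I₃) (Ideal.span {σ₁ ^ 2, σ₁ * σ₂, σ₂ ^ 2})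
      = Ideal.map (Ideal.Quotient.mk I₃)
          (Ideal.span (Set.range ![σ₁ * σ₂, σ₂ ^ 2, σ₁ * σ₂ ^ 2])) := by
  apply le_antisymm
  · rw [Ideal.map_le_iff_le_comap, Ideal.span_le]
    rintro g (rfl | rfl | rfl) <;> rw [SetLike.mem_coe, Ideal.mem_comap]
    · rw [Ideal.Quotient.eq_zero_iff_mem.mpr (Ideal.subset_span (by simp))]
      exact zero_mem _
    · exact Ideal.mem_map_of_mem _ (Ideal.subset_span ⟨0, rfl⟩)
    · exact Ideal.mem_map_of_mem _ (Ideal.subset_span ⟨1, rfl⟩)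
  · refine Ideal.map_mono (Ideal.span_le.mpr ?_)
    rintro - ⟨i, rfl⟩
    fin_cases i
    · exact Ideal.subset_span (by simp)
    · exact Ideal.subset_span (by simp)
    · rw [show σ₁ * σ₂ ^ 2 = σ₂ * (σ₁ * σ₂) by ring]
      exact Ideal.mul_mem_left _ σ₂ (Ideal.subset_span (by simp))

/-- For `S = F_3[t_1,t_2]` with `c_1 = t_1+t_2`, `c_2 = t_1 t_2`, the quotient of ideals
`(c_1^2, c_1c_2, c_2^2)/(c_1^2, c_1^3, c_2^3)` is isomorphic to
`F_3{c_1c_2, c_2^2, c_1c_2^2} ⊗ S/(c_1,c_2)`: given any family `m` whose images form a basis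
of the coinvariant algebra, the images of `a·m_j` for `a ∈ {c_1c_2, c_2^2, c_1c_2^2}` in
`S/(c_1^2, c_1^3, c_2^3)` are linearly independent and span the image of the ideal
`(c_1^2, c_1c_2, c_2^2)`. -/
theorem D_of_versal_PU3 (ι : Type*) (m : ι → MvPolynomial (Fin 2) (ZMod 3))
    (c : ℕ → MvPolynomial (Fin 2) (ZMod 3)) (hc : c = fun n => esymm (Fin 2) (ZMod 3) n)
    (bm : Module.Basis ι (ZMod 3) (MvPolynomial (Fin 2) (ZMod 3) ⧸ Ideal.span {c 1, c 2}))
    (hbm : ∀ j : ι, bm j = Ideal.Quotient.mk _ (m j)) :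
    LinearIndependent (ZMod 3)
      (fun x : Fin 3 × ι =>
        Ideal.Quotient.mk (Ideal.span {c 1 ^ 2, c 1 ^ 3, c 2 ^ 3})
          ((![c 1 * c 2, c 2 ^ 2, c 1 * c 2 ^ 2] x.1) * m x.2)) ∧
    Submodule.span (ZMod 3)
      (Set.range fun x : Fin 3 × ι =>
        Ideal.Quotient.mk (Ideal.span {c 1 ^ 2, c 1 ^ 3, c 2 ^ 3})
          ((![c 1 * c 2, c 2 ^ 2, c 1 * c 2 ^ 2] x.1) * m x.2))
      = Submodule.restrictScalars (ZMod 3)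
          (Ideal.map (Ideal.Quotient.mk (Ideal.span {c 1 ^ 2, c 1 ^ 3, c 2 ^ 3}))
            (Ideal.span {c 1 ^ 2, c 1 * c 2, c 2 ^ 2})) := by
  have hc1 : c 1 = σ₁ := hc ▸ esymm_fin_two_one _
  have hc2 : c 2 = σ₂ := hc ▸ esymm_fin_two_two _
  have hJ : Ideal.span {c 1, c 2} = J := by rw [hc1, hc2]
  rw [hc1, hc2]
  refine ⟨linearIndependent_mk_mul_of_basis bm hbm _ 2 ?_ ?_, ?_⟩
  · intro p hp i hi
    rw [Fin.sum_univ_three] at hp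
    obtain ⟨h0, h1⟩ := mem_span_σ_of_add_mem hp
    rw [hJ]
    fin_cases i
    exacts [h0, h1, absurd rfl hi]
  · intro r hr
    exact hJ ▸ mem_span_σ_of_σ₁_mul_σ₂_sq_mul_mem hr
  · rw [span_range_mk_mul_eq_map_of_basis bm hbm _ 2, map_span_eq_map_span_range]
    · intro g hg
      exact σ₁_mul_σ₂_sq_mul_mem (hJ ▸ hg)
    · intro i g hg
      fin_cases i
      exacts [exists_σ₁_mul_σ₂_mul_sub_mem (hJ ▸ hg), exists_σ₂_sq_mul_sub_mem (hJ ▸ hg),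
        ⟨0, by simpa using σ₁_mul_σ₂_sq_mul_mem (hJ ▸ hg)⟩]
end

section
/- Let V ⊆ F_2[x_1,...,x_h] be the F_2-linear span of the variables x_1,...,x_h. Then in F_2[x_1,...,x_h][z], the product ∏_{v ∈ V} (z + v) equals z^{2^h} + Σ_{i=0}^{h-1} d_i z^{2^i} for suitable polynomials d_i ∈ F_2[x_1,...,x_h]; in particular, only exponents of z that are powers of 2 occur. -/
/-!
Write `P_n` for the product of `X + v` over the `𝔽₂`-span of `v_1, …, v_n` in a ring of
characteristic `2`, and call a polynomial linearized when it is an `R`-combination of the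
`X ^ 2 ^ i`. Linearized polynomials are additive, so if `P_n - X ^ 2 ^ n` is linearized then
`P_{n+1} = P_n(X) * P_n(X + v) = P_n * (P_n + P_n(v))`. This equals `P_n ^ 2 + P_n(v) * P_n`,
and `P_n ^ 2 - X ^ 2 ^ (n + 1)` is linearized because squaring is additive in characteristic `2`.
-/

namespace Polynomial

noncomputable def linearized (R : Type*) [CommRing R] (p n : ℕ) : Submodule R R[X] :=
  Submodule.span R (Set.range fun i : Fin n => X ^ p ^ (i : ℕ))

variable {R : Type*} [CommRing R] {p n : ℕ}

theorem X_pow_pow_mem_linearized {i : ℕ} (hi : i < n) : (X : R[X]) ^ p ^ i ∈ linearized R p n :=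
  Submodule.subset_span ⟨⟨i, hi⟩, rfl⟩

theorem linearized_mono {m : ℕ} (h : m ≤ n) : linearized R p m ≤ linearized R p n :=
  Submodule.span_le.2 <| Set.range_subset_iff.2 fun i => X_pow_pow_mem_linearized (i.2.trans_le h)

theorem mem_linearized_succ_of_sub_mem {P : R[X]} (hP : P - X ^ p ^ n ∈ linearized R p n) :
    P ∈ linearized R p (n + 1) := by
  simpa using add_mem (X_pow_pow_mem_linearized (lt_add_one n)) (linearized_mono n.le_succ hP)

section ExpChar

variable [ExpChar R p]

theorem pow_mem_linearized_succ {Q : R[X]} (hQ : Q ∈ linearized R p n) :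
    Q ^ p ∈ linearized R p (n + 1) := by
  induction hQ using Submodule.span_induction with
  | mem x hx =>
    obtain ⟨i, rfl⟩ := hx
    rw [← pow_mul, ← pow_succ]
    exact X_pow_pow_mem_linearized (by omega)
  | zero => rw [zero_pow (expChar_pos R p).ne']; exact zero_mem _
  | add x y _ _ hx hy => rw [add_pow_expChar]; exact add_mem hx hy
  | smul a x _ hx =>
    rw [smul_eq_C_mul, mul_pow, ← C_pow, ← smul_eq_C_mul]
    exact Submodule.smul_mem _ _ hx

theorem comp_X_add_C_of_mem_linearized {Q : R[X]} (hQ : Q ∈ linearized R p n) (w : R) :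
    Q.comp (X + C w) = Q + C (Q.eval w) := by
  induction hQ using Submodule.span_induction with
  | mem x hx =>
    obtain ⟨i, rfl⟩ := hx
    simp [add_pow_expChar_pow]
  | zero => simp
  | add x y _ _ hx hy => rw [add_comp, hx, hy, eval_add, C_add]; ring
  | smul a x _ hx => rw [smul_eq_C_mul, mul_comp, C_comp, hx, eval_mul, eval_C, C_mul]; ring

end ExpChar

section CharTwo

variable [CharP R 2]

theorem mul_add_C_sub_mem_linearized {P : R[X]} (hP : P - X ^ 2 ^ n ∈ linearized R 2 n) (e : R) :
    P * (P + C e) - X ^ 2 ^ (n + 1) ∈ linearized R 2 (n + 1) := by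
  have hPmem := mem_linearized_succ_of_sub_mem hP
  have hsplit : P * (P + C e) - X ^ 2 ^ (n + 1) = (P - X ^ 2 ^ n) ^ 2 + e • P := by
    rw [sub_pow_char, ← pow_mul, ← pow_succ, smul_eq_C_mul]
    ring
  rw [hsplit]
  exact add_mem (pow_mem_linearized_succ hP) (Submodule.smul_mem _ e hPmem)

theorem prod_X_add_C_span_sub_mem_linearized :
    ∀ {n : ℕ} (v : Fin n → R),
      (∏ c : Fin n → ZMod 2, (X + C (∑ i, ((c i).cast : R) * v i))) - X ^ 2 ^ n ∈
        linearized R 2 n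
  | 0, v => by simp
  | n + 1, v => by
    set P := ∏ c : Fin n → ZMod 2, (X + C (∑ i, ((c i).cast : R) * v i.succ))
    have hP : P - X ^ 2 ^ n ∈ linearized R 2 n := prod_X_add_C_span_sub_mem_linearized _
    have hsplit : ∏ c : Fin (n + 1) → ZMod 2, (X + C (∑ i, ((c i).cast : R) * v i))
        = ∏ a : ZMod 2, P.comp (X + C ((a.cast : R) * v 0)) := by
      rw [← Fintype.prod_equiv (Fin.consEquiv fun _ => ZMod 2) _ _ fun _ => rfl,
        Fintype.prod_prod_type]
      refine Fintype.prod_congr _ _ fun a => ?_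
      simp [P, prod_comp, Fin.sum_univ_succ, add_assoc]
    rw [hsplit, show ∀ f : ZMod 2 → R[X], ∏ a, f a = f 0 * f 1 from Fin.prod_univ_two]
    simp only [ZMod.cast_zero, ZMod.cast_one', zero_mul, one_mul, C_0, add_zero, comp_X,
      comp_X_add_C_of_mem_linearized (mem_linearized_succ_of_sub_mem hP)]
    exact mul_add_C_sub_mem_linearized hP _

end CharTwo

end Polynomial

open MvPolynomial

/-- In `F_2[x_1,...,x_h][z]`, the product of `z + v` over all `v` in the `F_2`-span of the
variables equals `z^{2^h} + Σ_{i<h} d_i z^{2^i}` for suitable `d_i`; in particular only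
exponents of `z` that are powers of `2` occur. -/
theorem dickson_product_form (h : ℕ) :
    ∃ d : Fin h → MvPolynomial (Fin h) (ZMod 2),
      (∏ c : Fin h → ZMod 2,
          (Polynomial.X + Polynomial.C (∑ i : Fin h, C (c i) * X i)) :
        Polynomial (MvPolynomial (Fin h) (ZMod 2)))
      = Polynomial.X ^ (2 ^ h)
        + ∑ i : Fin h, Polynomial.C (d i) * Polynomial.X ^ (2 ^ (i : ℕ)) := by
  have hC : ∀ a : ZMod 2, C a = (a.cast : MvPolynomial (Fin h) (ZMod 2)) :=
    DFunLike.congr_fun (RingHom.ext_zmod C (ZMod.castHom dvd_rfl _))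
  obtain ⟨d, hd⟩ := (Submodule.mem_span_range_iff_exists_fun _).1 <|
    Polynomial.prod_X_add_C_span_sub_mem_linearized (X : Fin h → MvPolynomial (Fin h) (ZMod 2))
  refine ⟨d, ?_⟩
  simp only [hC, Polynomial.smul_eq_C_mul] at hd ⊢
  rw [hd, add_sub_cancel]
end

section
/- Let k be a field and let b_1,...,b_n be a regular sequence of homogeneous polynomials of positive degree in k[t_1,...,t_n] (the number of elements equals the number of variables). Then the quotient k[t_1,...,t_n]/(b_1,...,b_n) is a finite-dimensional k-vector space. -/
/-!
For a homogeneous ideal `I` of `R = k[t_1, …, t_n]` let `H_I = ∑_d dim_k (R/I)_d T^d`. If `b` is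
homogeneous of degree `e` and a non-zerodivisor on `R/I`, multiplication by `b` gives exact
sequences `0 → (R/I)_{d-e} → (R/I)_d → (R/(I + (b)))_d → 0`, so `H_{I+(b)} = (1 - T^e) H_I`.
Along the regular sequence `t_1, …, t_n`, whose quotient is `k`, this gives
`(1 - T)^n H_0 = 1`; along `b_1, …, b_n` it then gives
`H_{(b)} = ∏ (1 - T^{e_i}) H_0 = ∏ (1 + T + ⋯ + T^{e_i - 1})`, a polynomial. Hence `(R/(b))_d = 0`
for large `d`, and `R/(b)` is spanned by finitely many graded pieces.
-/

open Module RingTheory.Sequence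

attribute [local instance] MvPolynomial.gradedAlgebra

theorem Fin.range_eq_insert_last {α : Type*} {m : ℕ} (f : Fin (m + 1) → α) :
    Set.range f = insert (f (Fin.last m)) (Set.range fun i : Fin m => f i.castSucc) := by
  conv_lhs => rw [← Fin.snoc_init_self f]
  rw [Fin.range_snoc]
  rfl

section RegularSequence

variable {R : Type*} [CommRing R]

theorem Ideal.ofList_ofFn {m : ℕ} (f : Fin m → R) :
    Ideal.ofList (List.ofFn f) = Ideal.span (Set.range f) := by
  simp only [Ideal.ofList, List.mem_ofFn, Set.range]

theorem RingTheory.Sequence.isWeaklyRegular_concat_iff (rs : List R) (r : R) :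
    IsWeaklyRegular R (rs.concat r) ↔
      IsWeaklyRegular R rs ∧ ∀ x, r * x ∈ Ideal.ofList rs → x ∈ Ideal.ofList rs := by
  rw [List.concat_eq_append, isWeaklyRegular_append_iff, isWeaklyRegular_singleton_iff,
    isSMulRegular_quotient_iff_mem_of_smul_mem, smul_eq_mul, Ideal.mul_top]
  rfl

theorem RingTheory.Sequence.isWeaklyRegular_ofFn_succ_iff {m : ℕ} (f : Fin (m + 1) → R) :
    IsWeaklyRegular R (List.ofFn f) ↔ IsWeaklyRegular R (List.ofFn fun i => f i.castSucc) ∧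
      ∀ x, f (Fin.last m) * x ∈ Ideal.span (Set.range fun i : Fin m => f i.castSucc) →
        x ∈ Ideal.span (Set.range fun i : Fin m => f i.castSucc) := by
  rw [List.ofFn_succ', isWeaklyRegular_concat_iff, Ideal.ofList_ofFn]

end RegularSequence

namespace MvPolynomial

section Graded

variable {σ R : Type*} [CommRing R] {b : MvPolynomial σ R} {e : ℕ}

theorem IsHomogeneous.homogeneousComponent_mul (hb : b.IsHomogeneous e) (d : ℕ)
    (y : MvPolynomial σ R) :
    homogeneousComponent d (b * y) = if e ≤ d then b * homogeneousComponent (d - e) y else 0 := by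
  simp only [← decomposition.decompose'_apply]
  exact DirectSum.coe_decompose_mul_of_left_mem (homogeneousSubmodule σ R) d hb

theorem IsHomogeneous.mul_mem_homogeneousSubmodule_of_le (hb : b.IsHomogeneous e) {d : ℕ}
    (hed : e ≤ d) {v : MvPolynomial σ R} (hv : v ∈ homogeneousSubmodule σ R (d - e)) :
    b * v ∈ homogeneousSubmodule σ R d := by
  rw [mem_homogeneousSubmodule, ← Nat.add_sub_cancel' hed]
  exact hb.mul hv

end Graded

section Variables

variable {σ R : Type*}

theorem mem_span_X_image_of_X_mul_mem [CommSemiring R] {s : Set σ} {j : σ} (hj : j ∉ s)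
    {x : MvPolynomial σ R} (h : X j * x ∈ Ideal.span (X '' s)) :
    x ∈ Ideal.span (X '' s : Set (MvPolynomial σ R)) := by
  classical
  rw [mem_ideal_span_X_image] at h ⊢
  intro m hm
  have hjm : Finsupp.single j 1 + m ∈ (X j * x).support := by
    rwa [mem_support_iff, coeff_X_mul, ← mem_support_iff]
  obtain ⟨i, hi, hne⟩ := h _ hjm
  have hij : j ≠ i := fun hji => hj (hji ▸ hi)
  exact ⟨i, hi, by simpa [Finsupp.single_apply, hij] using hne⟩

theorem isWeaklyRegular_ofFn_X [CommRing R] {m : ℕ} {f : Fin m → σ}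
    (hf : Function.Injective f) :
    IsWeaklyRegular (MvPolynomial σ R) (List.ofFn fun i => (X (f i) : MvPolynomial σ R)) := by
  induction m with
  | zero => exact .nil _ _
  | succ m ih =>
    refine (isWeaklyRegular_ofFn_succ_iff _).2 ⟨ih (hf.comp (Fin.castSucc_injective m)), ?_⟩
    intro x hx
    rw [Set.range_comp' X] at hx ⊢
    exact mem_span_X_image_of_X_mul_mem (by
      rintro ⟨i, hi⟩; exact Fin.castSucc_ne_last i (hf hi)) hx

end Variables

variable {σ k : Type*} [Field k]

instance [Finite σ] (d : ℕ) : FiniteDimensional k (homogeneousSubmodule σ k d) :=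
  Submodule.finiteDimensional_of_le fun _ hp =>
    (mem_restrictTotalDegree ..).2 ((mem_homogeneousSubmodule ..).1 hp).totalDegree_le

noncomputable def homogeneousPart (I : Ideal (MvPolynomial σ k)) (d : ℕ) :
    Submodule k (MvPolynomial σ k) :=
  I.restrictScalars k ⊓ homogeneousSubmodule σ k d

instance [Finite σ] (I : Ideal (MvPolynomial σ k)) (d : ℕ) :
    FiniteDimensional k (homogeneousPart I d) :=
  Submodule.finiteDimensional_of_le inf_le_right

theorem homogeneousPart_mono {I J : Ideal (MvPolynomial σ k)} (h : I ≤ J) (d : ℕ) :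
    homogeneousPart I d ≤ homogeneousPart J d :=
  inf_le_inf_right _ (Submodule.restrictScalars_mono (S := k) h)

theorem homogeneousPart_top (d : ℕ) :
    homogeneousPart (⊤ : Ideal (MvPolynomial σ k)) d = homogeneousSubmodule σ k d := by
  rw [homogeneousPart, Submodule.restrictScalars_top, top_inf_eq]

section Step

variable {I : Ideal (MvPolynomial σ k)} {b : MvPolynomial σ k} {e d : ℕ}

theorem exists_eq_add_of_mem_homogeneousPart_sup_span_singleton
    (hI : I.IsHomogeneous (homogeneousSubmodule σ k)) (hb : b.IsHomogeneous e)
    {z : MvPolynomial σ k} (hz : z ∈ homogeneousPart (I ⊔ Ideal.span {b}) d) :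
    ∃ u ∈ homogeneousPart I d, ∃ v ∈ homogeneousSubmodule σ k (d - e),
      z = u + if e ≤ d then b * v else 0 := by
  obtain ⟨hzI, hzd⟩ := hz
  obtain ⟨u, hu, w, hw, rfl⟩ := Submodule.mem_sup.1 hzI
  obtain ⟨v, rfl⟩ := Ideal.mem_span_singleton'.1 hw
  refine ⟨homogeneousComponent d u, ⟨homogeneousComponent_mem_of_mem hI hu d,
    homogeneousComponent_mem d u⟩, homogeneousComponent (d - e) v,
    homogeneousComponent_mem _ v, ?_⟩
  conv_lhs => rw [← homogeneousComponent_eq_self hzd]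
  rw [map_add, mul_comm v b, hb.homogeneousComponent_mul]

theorem homogeneousPart_sup_span_singleton
    (hI : I.IsHomogeneous (homogeneousSubmodule σ k)) (hb : b.IsHomogeneous e) (hed : e ≤ d) :
    homogeneousPart (I ⊔ Ideal.span {b}) d =
      homogeneousPart I d ⊔ (homogeneousSubmodule σ k (d - e)).map (LinearMap.mulLeft k b) := by
  refine le_antisymm (fun z hz => ?_) (sup_le (homogeneousPart_mono le_sup_left d) ?_)
  · obtain ⟨u, hu, v, hv, rfl⟩ :=
      exists_eq_add_of_mem_homogeneousPart_sup_span_singleton hI hb hz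
    rw [if_pos hed]
    exact Submodule.add_mem_sup hu ⟨v, hv, rfl⟩
  · rintro _ ⟨v, hv, rfl⟩
    exact ⟨Ideal.mem_sup_right (Ideal.mul_mem_right _ _ (Ideal.mem_span_singleton_self b)),
      hb.mul_mem_homogeneousSubmodule_of_le hed hv⟩

theorem homogeneousPart_sup_span_singleton_of_lt
    (hI : I.IsHomogeneous (homogeneousSubmodule σ k)) (hb : b.IsHomogeneous e) (hde : d < e) :
    homogeneousPart (I ⊔ Ideal.span {b}) d = homogeneousPart I d := by
  refine le_antisymm (fun z hz => ?_) (homogeneousPart_mono le_sup_left d)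
  obtain ⟨u, hu, v, -, rfl⟩ := exists_eq_add_of_mem_homogeneousPart_sup_span_singleton hI hb hz
  rwa [if_neg hde.not_ge, add_zero]

theorem homogeneousPart_inf_map_mulLeft (hb : b.IsHomogeneous e)
    (hreg : ∀ x, b * x ∈ I → x ∈ I) (hed : e ≤ d) :
    homogeneousPart I d ⊓ (homogeneousSubmodule σ k (d - e)).map (LinearMap.mulLeft k b) =
      (homogeneousPart I (d - e)).map (LinearMap.mulLeft k b) := by
  refine le_antisymm ?_ ?_
  · rintro _ ⟨⟨hvI, -⟩, v, hv, rfl⟩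
    exact ⟨v, ⟨hreg v hvI, hv⟩, rfl⟩
  · rintro _ ⟨v, ⟨hvI, hv⟩, rfl⟩
    exact ⟨⟨I.mul_mem_left b hvI, hb.mul_mem_homogeneousSubmodule_of_le hed hv⟩, v, hv, rfl⟩

theorem finrank_homogeneousPart_sup_span_singleton [Finite σ]
    (hI : I.IsHomogeneous (homogeneousSubmodule σ k)) (hb : b.IsHomogeneous e) (hb0 : b ≠ 0)
    (hreg : ∀ x, b * x ∈ I → x ∈ I) (hed : e ≤ d) :
    finrank k (homogeneousPart (I ⊔ Ideal.span {b}) d) + finrank k (homogeneousPart I (d - e)) =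
      finrank k (homogeneousPart I d) + finrank k (homogeneousSubmodule σ k (d - e)) := by
  have hinj : Function.Injective (LinearMap.mulLeft k b) := fun _ _ => mul_left_cancel₀ hb0
  have hmap (N : Submodule k (MvPolynomial σ k)) :
      finrank k (N.map (LinearMap.mulLeft k b)) = finrank k N :=
    (Submodule.equivMapOfInjective _ hinj N).finrank_eq.symm
  have := Submodule.finrank_sup_add_finrank_inf_eq (homogeneousPart I d)
    ((homogeneousSubmodule σ k (d - e)).map (LinearMap.mulLeft k b))
  rwa [← homogeneousPart_sup_span_singleton hI hb hed,
    homogeneousPart_inf_map_mulLeft hb hreg hed, hmap, hmap] at this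

end Step

/-- For homogeneous `I`, the `d`-th coefficient is `dim_k (R/I)_d`. -/
noncomputable def hilbertSeriesQuot (I : Ideal (MvPolynomial σ k)) : PowerSeries ℤ :=
  PowerSeries.mk fun d =>
    (finrank k (homogeneousSubmodule σ k d) : ℤ) - finrank k (homogeneousPart I d)

theorem hilbertSeriesQuot_top : hilbertSeriesQuot (⊤ : Ideal (MvPolynomial σ k)) = 0 := by
  ext d
  rw [hilbertSeriesQuot, PowerSeries.coeff_mk, homogeneousPart_top, sub_self, map_zero]

theorem hilbertSeriesQuot_sup_span_singleton [Finite σ] {I : Ideal (MvPolynomial σ k)}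
    {b : MvPolynomial σ k} {e : ℕ} (hI : I.IsHomogeneous (homogeneousSubmodule σ k))
    (hb : b.IsHomogeneous e) (hreg : ∀ x, b * x ∈ I → x ∈ I) :
    hilbertSeriesQuot (I ⊔ Ideal.span {b}) = (1 - PowerSeries.X ^ e) * hilbertSeriesQuot I := by
  by_cases hb0 : b = 0
  · have hItop : I = ⊤ := eq_top_iff.2 fun x _ => hreg x (by simp [hb0])
    simp [hItop, hilbertSeriesQuot_top]
  ext d
  rw [sub_mul, one_mul, map_sub, mul_comm, PowerSeries.coeff_mul_X_pow']
  simp only [hilbertSeriesQuot, PowerSeries.coeff_mk]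
  split_ifs with hed
  · have := finrank_homogeneousPart_sup_span_singleton hI hb hb0 hreg hed
    omega
  · rw [homogeneousPart_sup_span_singleton_of_lt hI hb (not_le.1 hed), sub_zero]

theorem hilbertSeriesQuot_span_range [Finite σ] {m : ℕ} (b : Fin m → MvPolynomial σ k)
    (deg : Fin m → ℕ) (hhom : ∀ i, (b i).IsHomogeneous (deg i))
    (hreg : IsWeaklyRegular (MvPolynomial σ k) (List.ofFn b)) :
    hilbertSeriesQuot (Ideal.span (Set.range b)) =
      (∏ i, (1 - PowerSeries.X ^ deg i)) *
        hilbertSeriesQuot (⊥ : Ideal (MvPolynomial σ k)) := by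
  induction m with
  | zero => simp [Set.range_eq_empty]
  | succ m ih =>
    obtain ⟨hreg, hlast⟩ := (isWeaklyRegular_ofFn_succ_iff b).1 hreg
    have hI : (Ideal.span (Set.range fun i : Fin m => b i.castSucc)).IsHomogeneous
        (homogeneousSubmodule σ k) :=
      Ideal.homogeneous_span _ _ (by rintro _ ⟨i, rfl⟩; exact ⟨_, hhom i.castSucc⟩)
    rw [Fin.range_eq_insert_last, Ideal.span_insert, sup_comm,
      hilbertSeriesQuot_sup_span_singleton hI (hhom _) hlast,
      ih _ _ (fun i => hhom i.castSucc) hreg, Fin.prod_univ_castSucc]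
    ring

theorem homogeneousSubmodule_le_idealOfVars {d : ℕ} (hd : d ≠ 0) :
    homogeneousSubmodule σ k d ≤ (idealOfVars σ k).restrictScalars k := by
  intro p hp
  rw [Submodule.restrictScalars_mem, ← pow_one (idealOfVars σ k), mem_pow_idealOfVars_iff]
  intro x hx
  rw [Finsupp.degree_eq_weight_one]
  exact (Nat.one_le_iff_ne_zero.2 hd).trans_eq (hp (mem_support_iff.1 hx)).symm

theorem homogeneousPart_idealOfVars_zero : homogeneousPart (idealOfVars σ k) 0 = ⊥ := by
  refine eq_bot_iff.2 fun p hp => ?_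
  obtain ⟨hpI, hp0⟩ := Submodule.mem_inf.1 hp
  rw [homogeneousSubmodule_zero, Submodule.mem_one] at hp0
  obtain ⟨c, rfl⟩ := hp0
  have hc : C c ∈ idealOfVars σ k ^ 1 := by rwa [pow_one]
  rw [C_mem_pow_idealOfVars_iff, or_iff_left one_ne_zero] at hc
  simp [hc]

theorem finrank_homogeneousSubmodule_zero : finrank k (homogeneousSubmodule σ k 0) = 1 := by
  rw [homogeneousSubmodule_zero, Submodule.one_eq_span, finrank_span_singleton one_ne_zero]

theorem hilbertSeriesQuot_idealOfVars : hilbertSeriesQuot (idealOfVars σ k) = 1 := by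
  ext d
  simp only [hilbertSeriesQuot, PowerSeries.coeff_mk, PowerSeries.coeff_one]
  rcases eq_or_ne d 0 with rfl | hd
  · rw [homogeneousPart_idealOfVars_zero, finrank_bot, finrank_homogeneousSubmodule_zero]
    rfl
  · rw [homogeneousPart, inf_eq_right.2 (homogeneousSubmodule_le_idealOfVars hd), sub_self,
      if_neg hd]

theorem one_sub_X_pow_card_mul_hilbertSeriesQuot_bot [Fintype σ] :
    (1 - PowerSeries.X) ^ Fintype.card σ *
      hilbertSeriesQuot (⊥ : Ideal (MvPolynomial σ k)) = 1 := by
  have := hilbertSeriesQuot_span_range (k := k) (fun i => X ((Fintype.equivFin σ).symm i))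
    (fun _ => 1) (fun _ => isHomogeneous_X _ _) (isWeaklyRegular_ofFn_X (Equiv.injective _))
  rwa [Set.range_comp' X, Equiv.range_eq_univ, Set.image_univ, hilbertSeriesQuot_idealOfVars,
    pow_one, Finset.prod_const, Finset.card_univ, Fintype.card_fin, eq_comm] at this

theorem one_sub_X_pow_eq_mul_geom (e : ℕ) :
    (1 - PowerSeries.X ^ e : PowerSeries ℤ) =
      (1 - PowerSeries.X) *
        ((∑ j ∈ Finset.range e, Polynomial.X ^ j : Polynomial ℤ) : PowerSeries ℤ) := by
  rw [← Polynomial.coeToPowerSeries.ringHom_apply, map_sum]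
  simp only [map_pow, Polynomial.coeToPowerSeries.ringHom_apply, Polynomial.coe_X]
  exact (mul_neg_geom_sum _ e).symm

theorem hilbertSeriesQuot_span_range_eq_coe [Fintype σ] {m : ℕ} (hm : Fintype.card σ = m)
    (b : Fin m → MvPolynomial σ k) (deg : Fin m → ℕ)
    (hhom : ∀ i, (b i).IsHomogeneous (deg i))
    (hreg : IsWeaklyRegular (MvPolynomial σ k) (List.ofFn b)) :
    hilbertSeriesQuot (Ideal.span (Set.range b)) =
      ((∏ i, ∑ j ∈ Finset.range (deg i), Polynomial.X ^ j : Polynomial ℤ) :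
        PowerSeries ℤ) := by
  subst hm
  rw [hilbertSeriesQuot_span_range b deg hhom hreg]
  simp_rw [one_sub_X_pow_eq_mul_geom]
  rw [Finset.prod_mul_distrib, Finset.prod_const, Finset.card_univ, Fintype.card_fin,
    mul_right_comm, one_sub_X_pow_card_mul_hilbertSeriesQuot_bot, one_mul,
    ← Polynomial.coeToPowerSeries.ringHom_apply, map_prod]
  rfl

theorem homogeneousSubmodule_le_of_coeff_hilbertSeriesQuot_eq_zero [Finite σ]
    {I : Ideal (MvPolynomial σ k)} {d : ℕ} (h : PowerSeries.coeff d (hilbertSeriesQuot I) = 0) :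
    homogeneousSubmodule σ k d ≤ I.restrictScalars k := by
  rw [hilbertSeriesQuot, PowerSeries.coeff_mk, sub_eq_zero, Nat.cast_inj] at h
  rw [← Submodule.eq_of_le_of_finrank_eq inf_le_right h.symm]
  exact inf_le_left

theorem finiteDimensional_quotient_of_homogeneousSubmodule_le [Finite σ]
    (I : Ideal (MvPolynomial σ k)) (N : ℕ)
    (h : ∀ d, N ≤ d → homogeneousSubmodule σ k d ≤ I.restrictScalars k) :
    FiniteDimensional k (MvPolynomial σ k ⧸ I) := by
  let S := ⨆ d : Fin N, homogeneousSubmodule σ k d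
  let φ := (Ideal.Quotient.mkₐ k I).toLinearMap
  refine Module.Finite.of_surjective (φ ∘ₗ S.subtype) ?_
  rw [← LinearMap.range_eq_top, LinearMap.range_comp, Submodule.range_subtype, eq_top_iff]
  rintro z -
  obtain ⟨p, rfl⟩ := Ideal.Quotient.mkₐ_surjective k I z
  have hp : p ∈ ⨆ d, homogeneousSubmodule σ k d :=
    (DirectSum.Decomposition.isInternal (homogeneousSubmodule σ k)).submodule_iSup_eq_top ▸
      Submodule.mem_top
  refine Submodule.iSup_induction _ (motive := fun q => φ q ∈ S.map φ) hp (fun d q hq => ?_)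
    (by simp) fun q r hq hr => (map_add φ q r).symm ▸ add_mem hq hr
  by_cases hdN : d < N
  · exact Submodule.mem_map_of_mem
      (le_iSup (fun i : Fin N => homogeneousSubmodule σ k i) ⟨d, hdN⟩ hq)
  · have : φ q = 0 := Ideal.Quotient.eq_zero_iff_mem.2 (h d (not_lt.1 hdN) hq)
    exact this ▸ zero_mem _

theorem finiteDimensional_quotient_of_hilbertSeriesQuot_eq_coe [Finite σ]
    {I : Ideal (MvPolynomial σ k)} (P : Polynomial ℤ) (h : hilbertSeriesQuot I = P) :
    FiniteDimensional k (MvPolynomial σ k ⧸ I) :=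
  finiteDimensional_quotient_of_homogeneousSubmodule_le I (P.natDegree + 1) fun d hd =>
    homogeneousSubmodule_le_of_coeff_hilbertSeriesQuot_eq_zero <| by
      rw [h, Polynomial.coeff_coe, Polynomial.coeff_eq_zero_of_natDegree_lt (by omega)]

end MvPolynomial

theorem quotient_by_regular_homogeneous_finiteDimensional_general
    (k : Type*) [Field k] (n : ℕ) (b : Fin n → MvPolynomial (Fin n) k)
    (deg : Fin n → ℕ)
    (hhom : ∀ i, (b i).IsHomogeneous (deg i))
    (hreg : RingTheory.Sequence.IsRegular (MvPolynomial (Fin n) k) (List.ofFn b)) :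
    FiniteDimensional k (MvPolynomial (Fin n) k ⧸ Ideal.span (Set.range b)) :=
  MvPolynomial.finiteDimensional_quotient_of_hilbertSeriesQuot_eq_coe _
    (MvPolynomial.hilbertSeriesQuot_span_range_eq_coe (Fintype.card_fin n) b deg hhom
      hreg.toIsWeaklyRegular)

/-- If `b_1,...,b_n` is a regular sequence of homogeneous polynomials of positive degree in
`k[t_1,...,t_n]` (as many elements as variables), then `k[t_1,...,t_n]/(b_1,...,b_n)` is a
finite-dimensional `k`-vector space. -/
theorem quotient_by_regular_homogeneous_finiteDimensional
    (k : Type*) [Field k] (n : ℕ) (b : Fin n → MvPolynomial (Fin n) k)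
    (deg : Fin n → ℕ) (hdeg : ∀ i, 0 < deg i)
    (hhom : ∀ i, (b i).IsHomogeneous (deg i))
    (hreg : RingTheory.Sequence.IsRegular (MvPolynomial (Fin n) k) (List.ofFn b)) :
    FiniteDimensional k (MvPolynomial (Fin n) k ⧸ Ideal.span (Set.range b)) :=
  quotient_by_regular_homogeneous_finiteDimensional_general k n b deg hhom hreg
end
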